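/- arXiv:1907.05689 — 5 statements merged into one kernel-verified Lean document; each statement's English description precedes it below -/
import Mathlib

section
/- Let $\mathcal{E}$ be an $(\mathcal{F}_t)$-consistent coherent nonlinear expectation on a discrete-time filtered probability space and for a stopping time $\tau \le T$ define $\mathcal{E}(X \mid \mathcal{F}_\tau) := \sum_{t=0}^{T} \mathbb{I}(\tau = t)\, \mathcal{E}(X \mid \mathcal{F}_t)$. Then for any two stopping times $\sigma \le \tau \le T$ and any $X \in L^\infty(\mathcal{F}_T)$, $\mathcal{E}(X \mid \mathcal{F}_\sigma) = \mathcal{E}(\mathcal{E}(X \mid \mathcal{F}_\tau) \mid \mathcal{F}_\sigma)$ almost surely. -/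
open MeasureTheory Filter

variable {Ω : Type*} [MeasurableSpace Ω]

/-- An `(ℱ t)`-consistent coherent nonlinear expectation (Definition 2.2):
a family of operators `E t : L^∞(ℱ T) → L^∞(ℱ t)` which is strictly monotone,
translation equivariant, normalized, subadditive, positively homogeneous,
satisfies the Lebesgue property and is filtration-consistent. -/
structure ConsistentCNE (μ : Measure Ω) (ℱ : ℕ → MeasurableSpace Ω)
    (E : ℕ → (Ω → ℝ) → (Ω → ℝ)) : Prop where
  adapted : ∀ t X, Measurable[ℱ t] (E t X)
  mono : ∀ t (X Y : Ω → ℝ), Y ≤ᵐ[μ] X → E t Y ≤ᵐ[μ] E t X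
  strictMono : ∀ t (X Y : Ω → ℝ), Y ≤ᵐ[μ] X → E t X =ᵐ[μ] E t Y → X =ᵐ[μ] Y
  transl : ∀ t (X c : Ω → ℝ), Measurable[ℱ t] c →
      E t (fun ω => X ω + c ω) =ᵐ[μ] fun ω => E t X ω + c ω
  normalized : ∀ t, E t (fun _ => 0) =ᵐ[μ] fun _ => 0
  subadd : ∀ t (X Y : Ω → ℝ),
      E t (fun ω => X ω + Y ω) ≤ᵐ[μ] fun ω => E t X ω + E t Y ω
  posHom : ∀ t (X lam : Ω → ℝ), Measurable[ℱ t] lam → (∀ᵐ ω ∂μ, 0 ≤ lam ω) →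
      E t (fun ω => lam ω * X ω) =ᵐ[μ] fun ω => lam ω * E t X ω
  lebesgue : ∀ t (Xn : ℕ → Ω → ℝ) (X : Ω → ℝ) (K : ℝ),
      (∀ n, ∀ᵐ ω ∂μ, |Xn n ω| ≤ K) →
      (∀ᵐ ω ∂μ, Tendsto (fun n => Xn n ω) atTop (nhds (X ω))) →
      ∀ᵐ ω ∂μ, Tendsto (fun n => E t (Xn n) ω) atTop (nhds (E t X ω))
  tower : ∀ s t (X : Ω → ℝ), s ≤ t → E s X =ᵐ[μ] E s (E t X)

/-- A (discrete-time) stopping time for the filtration `ℱ`. -/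
def IsStoppingTimeD (ℱ : ℕ → MeasurableSpace Ω) (τ : Ω → ℕ) : Prop :=
  ∀ n, MeasurableSet[ℱ n] {ω | τ ω = n}

lemma cne_congr {μ : Measure Ω} {ℱ : ℕ → MeasurableSpace Ω} {E : ℕ → (Ω → ℝ) → (Ω → ℝ)}
    (hE : ConsistentCNE μ ℱ E) (t : ℕ) {f g : Ω → ℝ} (h : f =ᵐ[μ] g) :
    E t f =ᵐ[μ] E t g :=
  (hE.mono t g f h.le).antisymm (hE.mono t f g h.symm.le)

open scoped Classical in
lemma cne_loc {μ : Measure Ω} {ℱ : ℕ → MeasurableSpace Ω} {E : ℕ → (Ω → ℝ) → (Ω → ℝ)}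
    (hE : ConsistentCNE μ ℱ E) (t : ℕ) {A : Set Ω} (hA : MeasurableSet[ℱ t] A)
    (f g : Ω → ℝ) :
    E t (fun ω => if ω ∈ A then f ω else g ω) =ᵐ[μ]
      fun ω => if ω ∈ A then E t f ω else E t g ω := by
  classical
  set h : Ω → ℝ := fun ω => if ω ∈ A then f ω else g ω with hh
  set χ : Ω → ℝ := fun ω => if ω ∈ A then 1 else 0 with hχ
  set χ' : Ω → ℝ := fun ω => if ω ∈ A then 0 else 1 with hχ'
  have hχm : Measurable[ℱ t] χ := Measurable.ite hA measurable_const measurable_const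
  have hχ'm : Measurable[ℱ t] χ' := Measurable.ite hA measurable_const measurable_const
  have hχ0 : ∀ᵐ ω ∂μ, 0 ≤ χ ω :=
    Filter.Eventually.of_forall fun ω => by by_cases hω : ω ∈ A <;> simp [hχ, hω]
  have hχ'0 : ∀ᵐ ω ∂μ, 0 ≤ χ' ω :=
    Filter.Eventually.of_forall fun ω => by by_cases hω : ω ∈ A <;> simp [hχ', hω]
  have e1 := hE.posHom t h χ hχm hχ0
  have e2 := hE.posHom t f χ hχm hχ0
  have e1' := hE.posHom t h χ' hχ'm hχ'0
  have e2' := hE.posHom t g χ' hχ'm hχ'0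
  have hf : (fun ω => χ ω * h ω) = fun ω => χ ω * f ω := by
    funext ω; by_cases hω : ω ∈ A <;> simp [hχ, hh, hω]
  have hg : (fun ω => χ' ω * h ω) = fun ω => χ' ω * g ω := by
    funext ω; by_cases hω : ω ∈ A <;> simp [hχ', hh, hω]
  rw [hf] at e1
  rw [hg] at e1'
  filter_upwards [e1, e2, e1', e2'] with ω p1 p2 p1' p2'
  by_cases hω : ω ∈ A
  · have hχ1 : χ ω = 1 := by simp [hχ, hω]
    have hfin : χ ω * E t h ω = χ ω * E t f ω := p1.symm.trans p2
    simp only [hχ1, one_mul] at hfin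
    simp [hω, hfin]
  · have hχ1 : χ' ω = 1 := by simp [hχ', hω]
    have hfin : χ' ω * E t h ω = χ' ω * E t g ω := p1'.symm.trans p2'
    simp only [hχ1, one_mul] at hfin
    simp [hω, hfin]

/-- **Proposition 2.2.**  Defining the conditional expectation at a stopping
time `τ ≤ T` by `𝓔(X | ℱ_τ) := ∑_t 1_{τ = t} 𝓔(X | ℱ_t)`, i.e. pointwise
`ω ↦ E (τ ω) X ω`, the tower property extends to stopping times: for stopping
times `σ ≤ τ ≤ T`, `𝓔(X | ℱ_σ) = 𝓔(𝓔(X | ℱ_τ) | ℱ_σ)` a.s. -/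
theorem stmt1 (μ : Measure Ω) [IsProbabilityMeasure μ] (T : ℕ)
    (ℱ : ℕ → MeasurableSpace Ω) (hℱmono : Monotone ℱ)
    (hℱle : ∀ t, ℱ t ≤ ‹MeasurableSpace Ω›)
    (E : ℕ → (Ω → ℝ) → (Ω → ℝ)) (hE : ConsistentCNE μ ℱ E)
    (σ τ : Ω → ℕ) (hσ : IsStoppingTimeD ℱ σ) (hτ : IsStoppingTimeD ℱ τ)
    (hστ : ∀ ω, σ ω ≤ τ ω) (hτT : ∀ ω, τ ω ≤ T)
    (X : Ω → ℝ) (hXmeas : Measurable[ℱ T] X) (hXbdd : ∃ K, ∀ᵐ ω ∂μ, |X ω| ≤ K) :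
    (fun ω => E (σ ω) X ω) =ᵐ[μ]
      fun ω => E (σ ω) (fun ω' => E (τ ω') X ω') ω := by
  classical
  set Y : Ω → ℝ := fun ω' => E (τ ω') X ω' with hYdef
  set Z : ℕ → Ω → ℝ := fun t ω => E (max t (τ ω)) X ω with hZdef
  -- measurability of {τ ≤ t} w.r.t. ℱ t
  have hτle : ∀ t, MeasurableSet[ℱ t] {ω | τ ω ≤ t} := by
    intro t
    have hset : {ω | τ ω ≤ t} = ⋃ s ∈ Finset.range (t + 1), {ω | τ ω = s} := by
      ext ω; simp [Nat.lt_succ_iff]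
    rw [hset]
    exact (Finset.range (t + 1)).measurableSet_biUnion fun s hs =>
      hℱmono (Nat.lt_succ_iff.mp (Finset.mem_range.mp hs)) _ (hτ s)
  -- key backward induction: E t (Z t) = E t X a.s. for t ≤ T
  have key : ∀ d t, t + d = T → E t (Z t) =ᵐ[μ] E t X := by
    intro d
    induction d with
    | zero =>
      intro t ht
      have hZT : Z t = fun ω => E t X ω := by
        funext ω
        have hm : max t (τ ω) = t := Nat.max_eq_left (by have := hτT ω; omega)
        show E (max t (τ ω)) X ω = E t X ω
        rw [hm]
      rw [hZT]
      exact (hE.tower t t X le_rfl).symm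
    | succ d ih =>
      intro t ht
      have ihc : E (t + 1) (Z (t + 1)) =ᵐ[μ] E (t + 1) X := ih (t + 1) (by omega)
      have hloc := cne_loc hE t (hτle t) (E t X) (Z (t + 1))
      have hA1 : E t (E t X) =ᵐ[μ] E t X := (hE.tower t t X le_rfl).symm
      have hA2 : E t (Z (t + 1)) =ᵐ[μ] E t X :=
        ((hE.tower t (t + 1) (Z (t + 1)) (by omega)).trans
          (cne_congr hE t ihc)).trans (hE.tower t (t + 1) X (by omega)).symm
      refine ((cne_congr hE t (Filter.Eventually.of_forall fun ω => ?_)).trans hloc).trans ?_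
      · by_cases hω : τ ω ≤ t
        · have h1 : t ⊔ τ ω = t := Nat.max_eq_left hω
          simp [hZdef, hω, h1]
        · push_neg at hω
          have h1 : t ⊔ τ ω = τ ω := Nat.max_eq_right hω.le
          have h2 : (t + 1) ⊔ τ ω = τ ω := Nat.max_eq_right hω
          simp [hZdef, not_le.mpr hω, h1, h2]
      · filter_upwards [hA1, hA2] with ω e2 e3
        by_cases hω : τ ω ≤ t <;> simp [hω, e2, e3]
  -- localization at {σ = s}
  have main : ∀ s, s ≤ T → ∀ᵐ ω ∂μ, σ ω = s → E s X ω = E s Y ω := by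
    intro s hs
    set B : Set Ω := {ω | σ ω = s} with hBdef
    have hB : MeasurableSet[ℱ s] B := hσ s
    set χ : Ω → ℝ := fun ω => if ω ∈ B then 1 else 0 with hχdef
    have hχm : Measurable[ℱ s] χ := Measurable.ite hB measurable_const measurable_const
    have hχ0 : ∀ᵐ ω ∂μ, 0 ≤ χ ω :=
      Filter.Eventually.of_forall fun ω => by by_cases hω : ω ∈ B <;> simp [hχdef, hω]
    have p1 := hE.posHom s Y χ hχm hχ0
    have p2 := hE.posHom s (Z s) χ hχm hχ0
    have hYZ : (fun ω => χ ω * Y ω) = fun ω => χ ω * Z s ω := by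
      funext ω
      by_cases hω : ω ∈ B
      · have hωs : σ ω = s := hω
        have : max s (τ ω) = τ ω := Nat.max_eq_right (hωs ▸ hστ ω)
        simp [hYdef, hZdef, this]
      · simp [hχdef, hω]
    rw [hYZ] at p1
    have hk : E s (Z s) =ᵐ[μ] E s X := key (T - s) s (by omega)
    filter_upwards [p1, p2, hk] with ω e1 e2 e3
    intro hωs
    have hωB : ω ∈ B := hωs
    have hχ1 : χ ω = 1 := by simp [hχdef, hωB]
    have : χ ω * E s Y ω = χ ω * E s (Z s) ω := e1.symm.trans e2
    simp only [hχ1, one_mul] at this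
    rw [this, e3]
  have all : ∀ᵐ ω ∂μ, ∀ s ∈ Finset.range (T + 1), σ ω = s → E s X ω = E s Y ω := by
    rw [Filter.eventually_all_finset]
    intro s hs
    exact main s (Nat.lt_succ_iff.mp (Finset.mem_range.mp hs))
  filter_upwards [all] with ω h
  exact h (σ ω) (Finset.mem_range.mpr (Nat.lt_succ_iff.mpr ((hστ ω).trans (hτT ω)))) rfl
end

section
/- For the robust Gittins index $\gamma(s)$ of a single bandit, the optimal stopping value satisfies $\operatorname{essinf}_{\tau \in \mathcal{T}(s)} V(\tau, \gamma(s)) = 0$ almost surely, where $V(\tau, \lambda) := \mathcal{E}(\sum_{t=1}^{\tau} \beta^t (h(s+t) - \lambda) \mid \mathcal{F}_s)$. In particular, for every $\tau \in \mathcal{T}(s)$, $\mathcal{E}(\sum_{t=1}^{\tau} \beta^t (h(s+t) - \gamma(s)) \mid \mathcal{F}_s) \ge 0$. -/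
open MeasureTheory Filter Classical Finset

variable {Ω : Type*} [MeasurableSpace Ω]

/-- `𝒯(s)`: the bounded positive `(ℱ (s+t))`-stopping times. -/
def stopTimes (ℱ : ℕ → MeasurableSpace Ω) (s : ℕ) : Set (Ω → ℕ) :=
  {τ | (∀ ω, 1 ≤ τ ω) ∧ (∃ B, ∀ ω, τ ω ≤ B) ∧
    ∀ n, MeasurableSet[ℱ (s + n)] {ω | τ ω = n}}

/-- The optimal-stopping value
`V(τ, λ) = 𝓔(∑_{t=1}^{τ} β^t (h(s+t) - λ) | ℱ_s)`. -/
noncomputable def banditV (E : ℕ → (Ω → ℝ) → (Ω → ℝ)) (h : ℕ → Ω → ℝ) (β : ℝ)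
    (s : ℕ) (τ : Ω → ℕ) (lam : Ω → ℝ) : Ω → ℝ :=
  E s (fun ω => ∑ t ∈ Finset.Icc 1 (τ ω), β ^ t * (h (s + t) ω - lam ω))

/-- The hitting time `σ(s, λ) = inf {θ ≥ 1 : γ(s + θ) > λ}` of the Gittins
index process above a level `λ < C` (Definition 4.1). -/
noncomputable def hitTime (γ : ℕ → Ω → ℝ) (s : ℕ) (lam : Ω → ℝ) : Ω → ℕ :=
  fun ω => sInf {θ : ℕ | 1 ≤ θ ∧ lam ω < γ (s + θ) ω}

/-!
The optimal stopping value `λ ↦ essinf_τ V(τ, λ)` is antitone in the reward `λ`, and raising `λ`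
by an `ℱ_s`-measurable `c ≥ 0` lowers it by at most `R c`, where `R = β / (1 - β)` bounds the
total discount weight `∑_{t=1}^{τ} β^t`. It is also local: on an `ℱ_s`-measurable set it only
depends on `λ` there. Hence if the value at `γ(s)` exceeded `ε` on a non-null `ℱ_s`-set `A`, then
`γ(s) + (ε / R) 1_A` would still lie below every admissible reward, contradicting the maximality
of `γ(s)`; and if it were below `-ε` on `A`, then `γ(s) - (ε / R) 1_A` would be admissible,
contradicting that `γ(s)` is a lower bound. To keep that competitor bounded, `γ(s)` is first
shown to lie in `[0, C]`.
-/

structure IsCondEssInf {α ι : Type*} {m0 : MeasurableSpace α} (μ : Measure[m0] α)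
    (m : MeasurableSpace α) (S : Set ι) (X : ι → α → ℝ) (Z : α → ℝ) : Prop where
  measurable : Measurable[m] Z
  le : ∀ i ∈ S, Z ≤ᵐ[μ] X i
  greatest : ∀ Y : α → ℝ, Measurable[m] Y → (∀ i ∈ S, Y ≤ᵐ[μ] X i) → Y ≤ᵐ[μ] Z

lemma IsCondEssInf.ae_le_on {α ι : Type*} {m m0 : MeasurableSpace α} {μ : Measure[m0] α}
    {S : Set ι} {X : ι → α → ℝ} {Z : α → ℝ} (hZ : IsCondEssInf μ m S X Z) {b : ℝ}
    (hb : ∀ i ∈ S, ∀ᵐ ω ∂μ, b ≤ X i ω) {A : Set α} (hA : MeasurableSet[m] A) {Y : α → ℝ}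
    (hY : Measurable[m] Y) (hYX : ∀ i ∈ S, ∀ᵐ ω ∂μ, ω ∈ A → Y ω ≤ X i ω) :
    ∀ᵐ ω ∂μ, ω ∈ A → Y ω ≤ Z ω := by
  have hle := hZ.greatest (A.piecewise Y fun _ => b) (hY.piecewise hA measurable_const)
    fun i hi => by
      filter_upwards [hb i hi, hYX i hi] with ω hbω hYω
      by_cases hω : ω ∈ A
      · simpa [hω] using hYω hω
      · simpa [hω] using hbω
  filter_upwards [hle] with ω hω hωA
  simpa [hωA] using hω

lemma ae_nonpos_of_forall_pos {μ : Measure Ω} {f : Ω → ℝ}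
    (hf : ∀ ε > 0, ∀ᵐ ω ∂μ, f ω ≤ ε) : ∀ᵐ ω ∂μ, f ω ≤ 0 := by
  filter_upwards [ae_all_iff.2 fun n : ℕ => hf (1 / (n + 1)) Nat.one_div_pos_of_nat] with ω hω
  exact ge_of_tendsto' tendsto_one_div_add_atTop_nhds_zero_nat hω

lemma sum_Icc_pow_le_div {β : ℝ} (hβ0 : 0 ≤ β) (hβ1 : β < 1) (n : ℕ) :
    ∑ t ∈ Icc 1 n, β ^ t ≤ β / (1 - β) := by
  simpa [← Ico_add_one_right_eq_Icc] using geom_sum_Ico_le_of_lt_one (m := 1) (n := n + 1) hβ0 hβ1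

lemma le_sum_Icc_pow {β : ℝ} (hβ : 0 ≤ β) {n : ℕ} (hn : 1 ≤ n) :
    β ≤ ∑ t ∈ Icc 1 n, β ^ t := by
  simpa using single_le_sum (f := fun t => β ^ t) (fun t _ => pow_nonneg hβ t)
    (mem_Icc.2 ⟨le_rfl, hn⟩)

namespace ConsistentCNE

variable {μ : Measure Ω} {ℱ : ℕ → MeasurableSpace Ω} {E : ℕ → (Ω → ℝ) → Ω → ℝ} {t : ℕ}

lemma ae_eq_self (hE : ConsistentCNE μ ℱ E) {c : Ω → ℝ} (hc : Measurable[ℱ t] c) :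
    E t c =ᵐ[μ] c := by
  filter_upwards [hE.transl t (fun _ => 0) c hc, hE.normalized t] with ω h1 h2
  simpa [h2] using h1

lemma const_le (hE : ConsistentCNE μ ℱ E) {X : Ω → ℝ} {b : ℝ} (hb : ∀ ω, b ≤ X ω) :
    ∀ᵐ ω ∂μ, b ≤ E t X ω := by
  filter_upwards [hE.mono t X _ (ae_of_all _ hb), hE.ae_eq_self (t := t) measurable_const]
    with ω h1 h2
  rwa [h2] at h1

lemma le_const (hE : ConsistentCNE μ ℱ E) {X : Ω → ℝ} {b : ℝ} (hb : ∀ ω, X ω ≤ b) :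
    ∀ᵐ ω ∂μ, E t X ω ≤ b := by
  filter_upwards [hE.mono t _ X (ae_of_all _ hb), hE.ae_eq_self (t := t) measurable_const]
    with ω h1 h2
  rwa [h2] at h1

lemma ae_le_on (hE : ConsistentCNE μ ℱ E) {X Y : Ω → ℝ} {A : Set Ω}
    (hA : MeasurableSet[ℱ t] A) (hYX : ∀ ω ∈ A, Y ω ≤ X ω) :
    ∀ᵐ ω ∂μ, ω ∈ A → E t Y ω ≤ E t X ω := by
  set ind : Ω → ℝ := A.indicator 1
  have hind : Measurable[ℱ t] ind := measurable_const.indicator hA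
  have hind0 : ∀ᵐ ω ∂μ, 0 ≤ ind ω := ae_of_all _ (Set.indicator_nonneg fun _ _ => zero_le_one)
  have hmono := hE.mono t (fun ω => ind ω * X ω) (fun ω => ind ω * Y ω) <| ae_of_all _ fun ω => by
    by_cases hω : ω ∈ A <;> simp [ind, hω, hYX]
  filter_upwards [hmono, hE.posHom t X ind hind hind0, hE.posHom t Y ind hind hind0]
    with ω hω hX hY hωA
  simpa [ind, hωA, hX, hY] using hω

end ConsistentCNE

noncomputable def discountedCost (h : ℕ → Ω → ℝ) (β : ℝ) (s : ℕ) (τ : Ω → ℕ) (lam : Ω → ℝ)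
    (ω : Ω) : ℝ :=
  ∑ t ∈ Icc 1 (τ ω), β ^ t * (h (s + t) ω - lam ω)

lemma discountedCost_eq {α : Type*} (h : ℕ → α → ℝ) (β : ℝ) (s : ℕ) (τ : α → ℕ)
    (lam : α → ℝ) (ω : α) :
    discountedCost h β s τ lam ω =
      ∑ t ∈ Icc 1 (τ ω), β ^ t * h (s + t) ω - lam ω * ∑ t ∈ Icc 1 (τ ω), β ^ t := by
  rw [discountedCost, mul_sum, ← sum_sub_distrib]
  exact sum_congr rfl fun t _ => by ring

lemma banditV_eq {α : Type*} (E : ℕ → (α → ℝ) → α → ℝ) (h : ℕ → α → ℝ) (β : ℝ) (s : ℕ)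
    (τ : α → ℕ) (lam : α → ℝ) : banditV E h β s τ lam = E s (discountedCost h β s τ lam) :=
  rfl

lemma one_mem_stopTimes {α : Type*} (ℱ : ℕ → MeasurableSpace α) (s : ℕ) :
    (fun _ => 1) ∈ stopTimes ℱ s := by
  refine ⟨fun _ => le_rfl, ⟨1, fun _ => le_rfl⟩, fun n => ?_⟩
  by_cases hn : 1 = n <;> simp [hn]

def IsOptimalStoppingValue (μ : Measure Ω) (ℱ : ℕ → MeasurableSpace Ω)
    (E : ℕ → (Ω → ℝ) → Ω → ℝ) (h : ℕ → Ω → ℝ) (β : ℝ) (s : ℕ)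
    (Vinf : (Ω → ℝ) → Ω → ℝ) : Prop :=
  ∀ lam, IsCondEssInf μ (ℱ s) (stopTimes ℱ s) (fun τ => banditV E h β s τ lam) (Vinf lam)

def gittinsAdmissible (μ : Measure Ω) (m : MeasurableSpace Ω) (Vinf : (Ω → ℝ) → Ω → ℝ) :
    Set (Ω → ℝ) :=
  {lam | Measurable[m] lam ∧ (∃ K, ∀ ω, |lam ω| ≤ K) ∧ Vinf lam ≤ᵐ[μ] 0}

section Bandit

variable {μ : Measure Ω} {ℱ : ℕ → MeasurableSpace Ω} {E : ℕ → (Ω → ℝ) → Ω → ℝ}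
  {h : ℕ → Ω → ℝ} {β : ℝ} {s : ℕ}

lemma banditV_anti (hE : ConsistentCNE μ ℱ E) (hβ : 0 ≤ β) (τ : Ω → ℕ) {lam lam' : Ω → ℝ}
    (hle : lam ≤ᵐ[μ] lam') : banditV E h β s τ lam' ≤ᵐ[μ] banditV E h β s τ lam :=
  hE.mono s _ _ <| hle.mono fun ω hω =>
    sum_le_sum fun t _ => mul_le_mul_of_nonneg_left (by linarith) (pow_nonneg hβ t)

lemma banditV_sub_le_add (hE : ConsistentCNE μ ℱ E) (hβ0 : 0 ≤ β) (hβ1 : β < 1)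
    (τ : Ω → ℕ) (lam : Ω → ℝ) {c : Ω → ℝ} (hc : Measurable[ℱ s] c) (hc0 : 0 ≤ c) :
    ∀ᵐ ω ∂μ, banditV E h β s τ lam ω - β / (1 - β) * c ω ≤ banditV E h β s τ (lam + c) ω := by
  have hpt : ∀ ω, discountedCost h β s τ lam ω + -(β / (1 - β) * c ω) ≤
      discountedCost h β s τ (lam + c) ω := fun ω => by
    have hG := mul_le_mul_of_nonneg_left (sum_Icc_pow_le_div hβ0 hβ1 (τ ω)) (hc0 ω)
    rw [discountedCost_eq, discountedCost_eq, Pi.add_apply]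
    linarith
  filter_upwards [hE.mono s _ _ (ae_of_all _ hpt),
    hE.transl s _ (fun ω => -(β / (1 - β) * c ω)) (hc.const_mul _).neg] with ω h1 h2
  rw [banditV_eq, banditV_eq, sub_eq_add_neg, ← h2]
  exact h1

lemma neg_mul_le_banditV_of_abs_le (hE : ConsistentCNE μ ℱ E) (hβ0 : 0 ≤ β) (hβ1 : β < 1)
    (hh0 : ∀ t ω, 0 ≤ h t ω) (τ : Ω → ℕ) {lam : Ω → ℝ} {K : ℝ} (hK : ∀ ω, |lam ω| ≤ K) :
    ∀ᵐ ω ∂μ, -(β / (1 - β) * K) ≤ banditV E h β s τ lam ω :=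
  hE.const_le (X := discountedCost h β s τ lam) fun ω => by
    have hG := sum_Icc_pow_le_div hβ0 hβ1 (τ ω)
    have hG0 : 0 ≤ ∑ t ∈ Icc 1 (τ ω), β ^ t := sum_nonneg fun t _ => pow_nonneg hβ0 t
    have hH0 : 0 ≤ ∑ t ∈ Icc 1 (τ ω), β ^ t * h (s + t) ω :=
      sum_nonneg fun t _ => mul_nonneg (pow_nonneg hβ0 t) (hh0 _ ω)
    have hlam := abs_le.1 (hK ω)
    rw [discountedCost_eq]
    nlinarith

lemma neg_mul_le_banditV_of_neg (hE : ConsistentCNE μ ℱ E) (hβ : 0 ≤ β) (hh0 : ∀ t ω, 0 ≤ h t ω)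
    {τ : Ω → ℕ} (hτ : ∀ ω, 1 ≤ τ ω) {lam : Ω → ℝ} (hlam : Measurable[ℱ s] lam) :
    ∀ᵐ ω ∂μ, lam ω < 0 → -(β * lam ω) ≤ banditV E h β s τ lam ω := by
  have hpt : ∀ ω ∈ {ω | lam ω < 0}, -(β * lam ω) ≤ discountedCost h β s τ lam ω := by
    intro ω hω
    have hG := le_sum_Icc_pow hβ (hτ ω)
    have hH0 : 0 ≤ ∑ t ∈ Icc 1 (τ ω), β ^ t * h (s + t) ω :=
      sum_nonneg fun t _ => mul_nonneg (pow_nonneg hβ t) (hh0 _ ω)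
    have hneg := mul_le_mul_of_nonneg_left hG (neg_nonneg.2 (le_of_lt (hω : lam ω < 0)))
    rw [discountedCost_eq]
    linarith
  filter_upwards [hE.ae_le_on (measurableSet_lt hlam measurable_const) hpt,
    hE.ae_eq_self (c := fun ω => -(β * lam ω)) (hlam.const_mul β).neg] with ω h1 h2 hω
  rw [← h2]
  exact h1 hω

lemma banditV_one_const_nonpos (hE : ConsistentCNE μ ℱ E) (hβ : 0 ≤ β) {C : ℝ}
    (hhC : ∀ t ω, h t ω ≤ C) : ∀ᵐ ω ∂μ, banditV E h β s (fun _ => 1) (fun _ => C) ω ≤ 0 :=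
  hE.le_const fun ω => by
    simpa [discountedCost] using mul_nonpos_of_nonneg_of_nonpos hβ (sub_nonpos.2 (hhC (s + 1) ω))

end Bandit

namespace IsOptimalStoppingValue

variable {μ : Measure Ω} {ℱ : ℕ → MeasurableSpace Ω} {E : ℕ → (Ω → ℝ) → Ω → ℝ}
  {h : ℕ → Ω → ℝ} {β : ℝ} {s : ℕ} {Vinf : (Ω → ℝ) → Ω → ℝ}

lemma anti (hV : IsOptimalStoppingValue μ ℱ E h β s Vinf) (hE : ConsistentCNE μ ℱ E)
    (hβ : 0 ≤ β) {lam lam' : Ω → ℝ} (hle : lam ≤ᵐ[μ] lam') : Vinf lam' ≤ᵐ[μ] Vinf lam :=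
  (hV lam).greatest _ (hV lam').measurable fun τ hτ =>
    ((hV lam').le τ hτ).trans (banditV_anti hE hβ τ hle)

lemma congr (hV : IsOptimalStoppingValue μ ℱ E h β s Vinf) (hE : ConsistentCNE μ ℱ E)
    (hβ : 0 ≤ β) {lam lam' : Ω → ℝ} (hlam : lam =ᵐ[μ] lam') : Vinf lam =ᵐ[μ] Vinf lam' :=
  (hV.anti hE hβ hlam.symm.le).antisymm (hV.anti hE hβ hlam.le)

lemma sub_le_add (hV : IsOptimalStoppingValue μ ℱ E h β s Vinf) (hE : ConsistentCNE μ ℱ E)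
    (hβ0 : 0 ≤ β) (hβ1 : β < 1) (lam : Ω → ℝ) {c : Ω → ℝ} (hc : Measurable[ℱ s] c)
    (hc0 : 0 ≤ c) : ∀ᵐ ω ∂μ, Vinf lam ω - β / (1 - β) * c ω ≤ Vinf (lam + c) ω :=
  (hV (lam + c)).greatest (fun ω => Vinf lam ω - β / (1 - β) * c ω)
    ((hV lam).measurable.sub (hc.const_mul _)) fun τ hτ => by
      filter_upwards [(hV lam).le τ hτ, banditV_sub_le_add hE hβ0 hβ1 τ lam hc hc0]
        with ω h1 h2
      exact (sub_le_sub_right h1 _).trans h2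

lemma le_of_eqOn (hV : IsOptimalStoppingValue μ ℱ E h β s Vinf) (hE : ConsistentCNE μ ℱ E)
    (hβ0 : 0 ≤ β) (hβ1 : β < 1) (hh0 : ∀ t ω, 0 ≤ h t ω) {lam ν : Ω → ℝ} {K : ℝ}
    (hK : ∀ ω, |lam ω| ≤ K) {B : Set Ω} (hB : MeasurableSet[ℱ s] B)
    (hνlam : Set.EqOn ν lam B) : ∀ᵐ ω ∂μ, ω ∈ B → Vinf ν ω ≤ Vinf lam ω :=
  (hV lam).ae_le_on (fun τ _ => neg_mul_le_banditV_of_abs_le hE hβ0 hβ1 hh0 τ hK) hB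
    (hV ν).measurable fun τ hτ => by
      filter_upwards [(hV ν).le τ hτ, hE.ae_le_on hB (X := discountedCost h β s τ lam)
        (Y := discountedCost h β s τ ν) fun ω hω => by simp [discountedCost, hνlam hω]]
        with ω h1 h2 hω
      exact h1.trans (h2 hω)

lemma neg_mul_le_of_neg (hV : IsOptimalStoppingValue μ ℱ E h β s Vinf) (hE : ConsistentCNE μ ℱ E)
    (hβ0 : 0 ≤ β) (hβ1 : β < 1) (hh0 : ∀ t ω, 0 ≤ h t ω) {lam : Ω → ℝ}
    (hlam : Measurable[ℱ s] lam) {K : ℝ} (hK : ∀ ω, |lam ω| ≤ K) :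
    ∀ᵐ ω ∂μ, lam ω < 0 → -(β * lam ω) ≤ Vinf lam ω :=
  (hV lam).ae_le_on (fun τ _ => neg_mul_le_banditV_of_abs_le hE hβ0 hβ1 hh0 τ hK)
    (measurableSet_lt hlam measurable_const) (hlam.const_mul β).neg
    fun _ hτ => neg_mul_le_banditV_of_neg hE hβ0 hh0 hτ.1 hlam

lemma const_nonpos (hV : IsOptimalStoppingValue μ ℱ E h β s Vinf) (hE : ConsistentCNE μ ℱ E)
    (hβ : 0 ≤ β) {C : ℝ} (hhC : ∀ t ω, h t ω ≤ C) : Vinf (fun _ => C) ≤ᵐ[μ] 0 :=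
  ((hV _).le _ (one_mem_stopTimes ℱ s)).trans (banditV_one_const_nonpos hE hβ hhC)

lemma sub_mem_gittinsAdmissible (hV : IsOptimalStoppingValue μ ℱ E h β s Vinf)
    (hE : ConsistentCNE μ ℱ E) (hβ0 : 0 ≤ β) (hβ1 : β < 1) {lam c : Ω → ℝ}
    (hlam : Measurable[ℱ s] lam) {K : ℝ} (hK : ∀ ω, |lam ω| ≤ K) (hc : Measurable[ℱ s] c)
    (hc0 : 0 ≤ c) {b : ℝ} (hcb : ∀ ω, c ω ≤ b)
    (hVc : ∀ᵐ ω ∂μ, Vinf lam ω + β / (1 - β) * c ω ≤ 0) :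
    lam - c ∈ gittinsAdmissible μ (ℱ s) Vinf := by
  refine ⟨hlam.sub hc, ⟨K + b, fun ω => ?_⟩, ?_⟩
  · have hlamω := abs_le.1 (hK ω)
    have hc0ω : 0 ≤ c ω := hc0 ω
    have hcbω := hcb ω
    rw [Pi.sub_apply, abs_le]
    constructor <;> linarith
  · filter_upwards [hV.sub_le_add hE hβ0 hβ1 (lam - c) hc hc0, hVc] with ω h1 h2
    rw [sub_add_cancel] at h1
    show Vinf (lam - c) ω ≤ 0
    linarith

end IsOptimalStoppingValue

section GittinsIndex

variable {μ : Measure Ω} {ℱ : ℕ → MeasurableSpace Ω} {E : ℕ → (Ω → ℝ) → Ω → ℝ}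
  {h : ℕ → Ω → ℝ} {β : ℝ} {s : ℕ} {Vinf : (Ω → ℝ) → Ω → ℝ} {γ : Ω → ℝ}

lemma nonneg_of_mem_gittinsAdmissible (hV : IsOptimalStoppingValue μ ℱ E h β s Vinf)
    (hE : ConsistentCNE μ ℱ E) (hβ0 : 0 < β) (hβ1 : β < 1) (hh0 : ∀ t ω, 0 ≤ h t ω)
    {lam : Ω → ℝ} (hlam : lam ∈ gittinsAdmissible μ (ℱ s) Vinf) : 0 ≤ᵐ[μ] lam := by
  obtain ⟨hm, ⟨K, hK⟩, hV0⟩ := hlam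
  filter_upwards [hV.neg_mul_le_of_neg hE hβ0.le hβ1 hh0 hm hK, hV0] with ω h1 h2
  show (0 : ℝ) ≤ lam ω
  refine le_of_not_gt fun hω => ?_
  have hV0ω : Vinf lam ω ≤ 0 := h2
  linarith [h1 hω, mul_neg_of_pos_of_neg hβ0 hω]

lemma gittins_nonneg (hγ : IsCondEssInf μ (ℱ s) (gittinsAdmissible μ (ℱ s) Vinf) id γ)
    (hV : IsOptimalStoppingValue μ ℱ E h β s Vinf) (hE : ConsistentCNE μ ℱ E)
    (hβ0 : 0 < β) (hβ1 : β < 1) (hh0 : ∀ t ω, 0 ≤ h t ω) : 0 ≤ᵐ[μ] γ :=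
  hγ.greatest 0 measurable_const fun _ hlam =>
    nonneg_of_mem_gittinsAdmissible hV hE hβ0 hβ1 hh0 hlam

lemma gittins_le_const (hγ : IsCondEssInf μ (ℱ s) (gittinsAdmissible μ (ℱ s) Vinf) id γ)
    (hV : IsOptimalStoppingValue μ ℱ E h β s Vinf) (hE : ConsistentCNE μ ℱ E) (hβ : 0 ≤ β)
    {C : ℝ} (hC : 0 ≤ C) (hhC : ∀ t ω, h t ω ≤ C) : γ ≤ᵐ[μ] fun _ => C :=
  hγ.le _ ⟨measurable_const, ⟨C, fun _ => (abs_of_nonneg hC).le⟩, hV.const_nonpos hE hβ hhC⟩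

/-- `γ` lies in `[0, C]` only a.e., while admissibility asks for a bound everywhere. -/
lemma exists_abs_le_ae_eq_gittins
    (hγ : IsCondEssInf μ (ℱ s) (gittinsAdmissible μ (ℱ s) Vinf) id γ)
    (hV : IsOptimalStoppingValue μ ℱ E h β s Vinf) (hE : ConsistentCNE μ ℱ E)
    (hβ0 : 0 < β) (hβ1 : β < 1) {C : ℝ} (hC : 0 ≤ C) (hh0 : ∀ t ω, 0 ≤ h t ω)
    (hhC : ∀ t ω, h t ω ≤ C) :
    ∃ γt : Ω → ℝ, Measurable[ℱ s] γt ∧ (∀ ω, |γt ω| ≤ C) ∧ γ =ᵐ[μ] γt := by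
  refine ⟨fun ω => max 0 (min (γ ω) C),
    measurable_const.max (hγ.measurable.min measurable_const), fun ω =>
      abs_le.2 ⟨by linarith [le_max_left 0 (min (γ ω) C)], max_le hC (min_le_right _ _)⟩, ?_⟩
  filter_upwards [gittins_nonneg hγ hV hE hβ0 hβ1 hh0,
    gittins_le_const hγ hV hE hβ0.le hC hhC] with ω h0 hCω
  have h0' : 0 ≤ γ ω := h0
  simp only [min_eq_left hCω, max_eq_right h0']

/-- On `{c > 0}` the value at `γ + c` is still positive, so no admissible reward lies below
`γ + c` there; elsewhere `γ` itself is a lower bound. -/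
lemma add_le_of_mem_gittinsAdmissible
    (hγ : IsCondEssInf μ (ℱ s) (gittinsAdmissible μ (ℱ s) Vinf) id γ)
    (hV : IsOptimalStoppingValue μ ℱ E h β s Vinf) (hE : ConsistentCNE μ ℱ E)
    (hβ0 : 0 ≤ β) (hβ1 : β < 1) (hh0 : ∀ t ω, 0 ≤ h t ω) {c : Ω → ℝ}
    (hc : Measurable[ℱ s] c) (hc0 : 0 ≤ c) (hcV : ∀ ω, 0 < c ω → β / (1 - β) * c ω < Vinf γ ω)
    {lam : Ω → ℝ} (hlam : lam ∈ gittinsAdmissible μ (ℱ s) Vinf) : γ + c ≤ᵐ[μ] lam := by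
  have hγlam := hγ.le lam hlam
  obtain ⟨hm, ⟨K, hK⟩, hV0⟩ := hlam
  set ν := fun ω => min (lam ω) ((γ + c) ω)
  have hν : ν ≤ᵐ[μ] γ + c := ae_of_all _ fun ω => min_le_right _ _
  filter_upwards [hV.anti hE hβ0 hν, hV.sub_le_add hE hβ0 hβ1 γ hc hc0,
    hV.le_of_eqOn hE hβ0 hβ1 hh0 hK (measurableSet_lt hm (hγ.measurable.add hc))
      (ν := ν) fun ω hω => min_eq_left (le_of_lt hω),
    hV0, hγlam] with ω h1 h2 h3 h4 h5
  refine le_of_not_gt fun hlt => ?_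
  have hc0ω : 0 ≤ c ω := hc0 ω
  rcases hc0ω.lt_or_eq with hcpos | hczero
  · have hV0ω : Vinf lam ω ≤ 0 := h4
    linarith [h3 hlt, hcV ω hcpos]
  · rw [Pi.add_apply, ← hczero, add_zero] at hlt
    exact absurd h5 (not_le.2 hlt)

lemma optimalStoppingValue_gittins_nonpos
    (hγ : IsCondEssInf μ (ℱ s) (gittinsAdmissible μ (ℱ s) Vinf) id γ)
    (hV : IsOptimalStoppingValue μ ℱ E h β s Vinf) (hE : ConsistentCNE μ ℱ E)
    (hβ0 : 0 < β) (hβ1 : β < 1) (hh0 : ∀ t ω, 0 ≤ h t ω) : Vinf γ ≤ᵐ[μ] 0 := by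
  set R := β / (1 - β)
  have hR : 0 < R := div_pos hβ0 (by linarith)
  refine ae_nonpos_of_forall_pos fun ε hε => ?_
  set A := {ω | ε < Vinf γ ω}
  have hA : MeasurableSet[ℱ s] A := measurableSet_lt measurable_const (hV γ).measurable
  set c := A.indicator fun _ => ε / R
  have hc : Measurable[ℱ s] c := measurable_const.indicator hA
  have hc0 : 0 ≤ c := Set.indicator_nonneg fun _ _ => by positivity
  have hcA : ∀ ω ∈ A, c ω = ε / R := fun ω hω => Set.indicator_of_mem hω _
  have hcV : ∀ ω, 0 < c ω → R * c ω < Vinf γ ω := fun ω hcω => by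
    have hω : ω ∈ A := by_contra fun hω => hcω.ne' (Set.indicator_of_notMem hω _)
    rw [hcA ω hω, mul_div_cancel₀ ε hR.ne']
    exact hω
  filter_upwards [hγ.greatest _ (hγ.measurable.add hc) fun _ hlam =>
    add_le_of_mem_gittinsAdmissible hγ hV hE hβ0.le hβ1 hh0 hc hc0 hcV hlam] with ω hω
  refine le_of_not_gt fun hεω => ?_
  have : 0 < ε / R := by positivity
  simp only [Pi.add_apply, hcA ω hεω] at hω
  linarith

lemma optimalStoppingValue_gittins_nonneg
    (hγ : IsCondEssInf μ (ℱ s) (gittinsAdmissible μ (ℱ s) Vinf) id γ)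
    (hV : IsOptimalStoppingValue μ ℱ E h β s Vinf) (hE : ConsistentCNE μ ℱ E)
    (hβ0 : 0 < β) (hβ1 : β < 1) {C : ℝ} (hC : 0 ≤ C) (hh0 : ∀ t ω, 0 ≤ h t ω)
    (hhC : ∀ t ω, h t ω ≤ C) : 0 ≤ᵐ[μ] Vinf γ := by
  set R := β / (1 - β)
  have hR : 0 < R := div_pos hβ0 (by linarith)
  have hVγ := optimalStoppingValue_gittins_nonpos hγ hV hE hβ0 hβ1 hh0
  obtain ⟨γt, hγtm, hγtC, hγt⟩ := exists_abs_le_ae_eq_gittins hγ hV hE hβ0 hβ1 hC hh0 hhC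
  have hVγt := hV.congr hE hβ0.le hγt
  suffices hε : ∀ ε > 0, ∀ᵐ ω ∂μ, -Vinf γ ω ≤ ε by
    filter_upwards [ae_nonpos_of_forall_pos hε] with ω hω
    exact neg_nonpos.1 hω
  intro ε hε
  set A := {ω | Vinf γ ω < -ε}
  have hA : MeasurableSet[ℱ s] A := measurableSet_lt (hV γ).measurable measurable_const
  set c := A.indicator fun _ => ε / R
  have hc : Measurable[ℱ s] c := measurable_const.indicator hA
  have hc0 : 0 ≤ c := Set.indicator_nonneg fun _ _ => by positivity
  have hcle : ∀ ω, c ω ≤ ε / R := Set.indicator_le_self' fun _ _ => by positivity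
  have hcA : ∀ ω ∈ A, c ω = ε / R := fun ω hω => Set.indicator_of_mem hω _
  have hVc : ∀ᵐ ω ∂μ, Vinf γt ω + R * c ω ≤ 0 := by
    filter_upwards [hVγt, hVγ] with ω h1 h2
    have h2' : Vinf γ ω ≤ 0 := h2
    rw [← h1]
    by_cases hω : ω ∈ A
    · have hωA : Vinf γ ω < -ε := hω
      rw [hcA ω hω, mul_div_cancel₀ ε hR.ne']
      linarith
    · rw [show c ω = 0 from Set.indicator_of_notMem hω _, mul_zero, add_zero]
      exact h2'
  have hlam := hV.sub_mem_gittinsAdmissible hE hβ0.le hβ1 hγtm hγtC hc hc0 hcle hVc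
  filter_upwards [hγ.le _ hlam, hγt] with ω h1 h2
  refine le_of_not_gt fun hεω => ?_
  have : 0 < ε / R := by positivity
  simp only [id, Pi.sub_apply, hcA ω (show Vinf γ ω < -ε by linarith)] at h1
  linarith

end GittinsIndex

theorem stmt5_general (μ : Measure Ω)
    (ℱ : ℕ → MeasurableSpace Ω)
    (E : ℕ → (Ω → ℝ) → (Ω → ℝ)) (hE : ConsistentCNE μ ℱ E)
    (T : ℕ) (C : ℝ) (hC : 0 < C) (β : ℝ) (hβ : β ∈ Set.Ioo (0 : ℝ) 1)
    (h : ℕ → Ω → ℝ)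
    (hhBdd : ∀ t, t ≤ T → ∀ ω, 0 ≤ h t ω ∧ h t ω < C)
    (hhC : ∀ t, T < t → ∀ ω, h t ω = C)
    (s : ℕ)
    -- `Vinf s λ` is the `ℱ_s`-essential infimum of `{V(τ,λ) : τ ∈ 𝒯(s)}`
    (Vinf : (Ω → ℝ) → Ω → ℝ)
    (hVinfMeas : ∀ lam, Measurable[ℱ s] (Vinf lam))
    (hVinfLB : ∀ lam, ∀ τ ∈ stopTimes ℱ s, Vinf lam ≤ᵐ[μ] banditV E h β s τ lam)
    (hVinfGreatest : ∀ (lam Z : Ω → ℝ), Measurable[ℱ s] Z →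
      (∀ τ ∈ stopTimes ℱ s, Z ≤ᵐ[μ] banditV E h β s τ lam) → Z ≤ᵐ[μ] Vinf lam)
    -- `γ s` is the `ℱ_s`-essential infimum of `{λ ∈ L^∞(ℱ_s) : Vinf λ ≤ 0 a.s.}`
    (γ : ℕ → Ω → ℝ) (hγMeas : Measurable[ℱ s] (γ s))
    (hγLB : ∀ lam : Ω → ℝ, Measurable[ℱ s] lam → (∃ K, ∀ ω, |lam ω| ≤ K) →
      Vinf lam ≤ᵐ[μ] 0 → γ s ≤ᵐ[μ] lam)
    (hγGreatest : ∀ Z : Ω → ℝ, Measurable[ℱ s] Z →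
      (∀ lam : Ω → ℝ, Measurable[ℱ s] lam → (∃ K, ∀ ω, |lam ω| ≤ K) →
        Vinf lam ≤ᵐ[μ] 0 → Z ≤ᵐ[μ] lam) → Z ≤ᵐ[μ] γ s) :
    Vinf (γ s) =ᵐ[μ] 0 ∧
      ∀ τ ∈ stopTimes ℱ s, (0 : Ω → ℝ) ≤ᵐ[μ] banditV E h β s τ (γ s) := by
  obtain ⟨hβ0, hβ1⟩ := hβ
  have hV : IsOptimalStoppingValue μ ℱ E h β s Vinf := fun lam =>
    ⟨hVinfMeas lam, hVinfLB lam, hVinfGreatest lam⟩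
  have hγ : IsCondEssInf μ (ℱ s) (gittinsAdmissible μ (ℱ s) Vinf) id (γ s) :=
    ⟨hγMeas, fun lam ⟨hm, hK, hV0⟩ => hγLB lam hm hK hV0,
      fun Z hZ hle => hγGreatest Z hZ fun lam hm hK hV0 => hle lam ⟨hm, hK, hV0⟩⟩
  have hh0 : ∀ t ω, 0 ≤ h t ω := fun t ω => by
    rcases le_or_gt t T with ht | ht
    · exact (hhBdd t ht ω).1
    · exact (hhC t ht ω).symm ▸ hC.le
  have hhC' : ∀ t ω, h t ω ≤ C := fun t ω => by
    rcases le_or_gt t T with ht | ht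
    · exact (hhBdd t ht ω).2.le
    · exact (hhC t ht ω).le
  have hnonneg := optimalStoppingValue_gittins_nonneg hγ hV hE hβ0 hβ1 hC.le hh0 hhC'
  exact ⟨(optimalStoppingValue_gittins_nonpos hγ hV hE hβ0 hβ1 hh0).antisymm hnonneg,
    fun τ hτ => hnonneg.trans ((hV _).le τ hτ)⟩

/-- **Theorem 4.1 & Corollary 4.1.**  For the robust Gittins index `γ(s)`
(given through its defining property as the `ℱ_s`-essential infimum of rewards
making the optimal stopping value nonpositive, with `Vinf s λ` the
`ℱ_s`-essential infimum of `{V(τ,λ) : τ ∈ 𝒯(s)}`), the optimal stopping value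
satisfies `essinf_τ V(τ, γ(s)) = 0` a.s.; in particular `V(τ, γ(s)) ≥ 0` for
every `τ ∈ 𝒯(s)`. -/
theorem stmt5 (μ : Measure Ω) [IsProbabilityMeasure μ]
    (ℱ : ℕ → MeasurableSpace Ω) (hℱmono : Monotone ℱ)
    (hℱle : ∀ t, ℱ t ≤ ‹MeasurableSpace Ω›)
    (E : ℕ → (Ω → ℝ) → (Ω → ℝ)) (hE : ConsistentCNE μ ℱ E)
    (T : ℕ) (C : ℝ) (hC : 0 < C) (β : ℝ) (hβ : β ∈ Set.Ioo (0 : ℝ) 1)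
    (h : ℕ → Ω → ℝ) (hhAdapted : ∀ t, Measurable[ℱ t] (h t))
    (hhBdd : ∀ t, t ≤ T → ∀ ω, 0 ≤ h t ω ∧ h t ω < C)
    (hhC : ∀ t, T < t → ∀ ω, h t ω = C)
    (s : ℕ)
    -- `Vinf s λ` is the `ℱ_s`-essential infimum of `{V(τ,λ) : τ ∈ 𝒯(s)}`
    (Vinf : (Ω → ℝ) → Ω → ℝ)
    (hVinfMeas : ∀ lam, Measurable[ℱ s] (Vinf lam))
    (hVinfLB : ∀ lam, ∀ τ ∈ stopTimes ℱ s, Vinf lam ≤ᵐ[μ] banditV E h β s τ lam)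
    (hVinfGreatest : ∀ (lam Z : Ω → ℝ), Measurable[ℱ s] Z →
      (∀ τ ∈ stopTimes ℱ s, Z ≤ᵐ[μ] banditV E h β s τ lam) → Z ≤ᵐ[μ] Vinf lam)
    -- `γ s` is the `ℱ_s`-essential infimum of `{λ ∈ L^∞(ℱ_s) : Vinf λ ≤ 0 a.s.}`
    (γ : ℕ → Ω → ℝ) (hγMeas : Measurable[ℱ s] (γ s))
    (hγLB : ∀ lam : Ω → ℝ, Measurable[ℱ s] lam → (∃ K, ∀ ω, |lam ω| ≤ K) →
      Vinf lam ≤ᵐ[μ] 0 → γ s ≤ᵐ[μ] lam)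
    (hγGreatest : ∀ Z : Ω → ℝ, Measurable[ℱ s] Z →
      (∀ lam : Ω → ℝ, Measurable[ℱ s] lam → (∃ K, ∀ ω, |lam ω| ≤ K) →
        Vinf lam ≤ᵐ[μ] 0 → Z ≤ᵐ[μ] lam) → Z ≤ᵐ[μ] γ s) :
    Vinf (γ s) =ᵐ[μ] 0 ∧
      ∀ τ ∈ stopTimes ℱ s, (0 : Ω → ℝ) ≤ᵐ[μ] banditV E h β s τ (γ s) :=
  stmt5_general μ ℱ E hE T C hC β hβ h hhBdd hhC s Vinf hVinfMeas hVinfLB hVinfGreatest γ hγMeas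
    hγLB hγGreatest
end

section
/- In the robust one-armed bandit setting, for every $\lambda \in L^\infty(\mathcal{F}_s)$ with values in $[0,C)$, the hitting time $\sigma(s,\lambda) = \inf\{\theta \ge 1 : \gamma(s+\theta) > \lambda\}$ attains the optimal stopping value: $V(\sigma(s,\lambda), \lambda) = \operatorname{essinf}_{\tau \in \mathcal{T}(s)} V(\tau, \lambda)$. In particular $V(\sigma(s,\gamma(s)), \gamma(s)) = 0$. -/
open MeasureTheory Filter Classical Finset

variable {Ω : Type*} [MeasurableSpace Ω]

section Aux

variable {Ω : Type*} [MeasurableSpace Ω] {μ : Measure Ω} {ℱ : ℕ → MeasurableSpace Ω}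
  {E : ℕ → (Ω → ℝ) → (Ω → ℝ)}

lemma ConsistentCNE.aeeq (hE : ConsistentCNE μ ℱ E) {t : ℕ} {X Y : Ω → ℝ}
    (hXY : X =ᵐ[μ] Y) : E t X =ᵐ[μ] E t Y :=
  (hE.mono t Y X hXY.le).antisymm (hE.mono t X Y hXY.symm.le)

lemma ConsistentCNE.const (hE : ConsistentCNE μ ℱ E) (t : ℕ) (K : ℝ) :
    E t (fun _ => K) =ᵐ[μ] fun _ => K := by
  have h1 := hE.transl t (fun _ => 0) (fun _ => K) measurable_const
  have h2 := hE.normalized t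
  have he : (fun _ : Ω => (0:ℝ) + K) = fun _ : Ω => K := by funext; ring
  rw [he] at h1
  refine h1.trans ?_
  filter_upwards [h2] with ω hω
  simp [hω]

lemma ConsistentCNE.aeAbsLe (hE : ConsistentCNE μ ℱ E) (t : ℕ) {X : Ω → ℝ} {K : ℝ}
    (hX : ∀ᵐ ω ∂μ, |X ω| ≤ K) : ∀ᵐ ω ∂μ, |E t X ω| ≤ K := by
  have hub : X ≤ᵐ[μ] fun _ => K := by
    filter_upwards [hX] with ω hω; exact (abs_le.1 hω).2
  have hlb : (fun _ : Ω => -K) ≤ᵐ[μ] X := by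
    filter_upwards [hX] with ω hω; exact (abs_le.1 hω).1
  have h1 := (hE.mono t (fun _ => K) X hub).trans (hE.const t K).le
  have h2 := ((hE.const t (-K)).symm.le.trans (hE.mono t X (fun _ => -K) hlb))
  filter_upwards [h1, h2] with ω ha hb
  exact abs_le.2 ⟨hb, ha⟩

lemma sum_Icc_shift (f : ℕ → ℝ) (r : ℕ) :
    ∑ t ∈ Finset.Icc 1 (r+1), f t = f 1 + ∑ t ∈ Finset.Icc 1 r, f (t+1) := by
  induction r with
  | zero => simp
  | succ n ih =>
      rw [Finset.sum_Icc_succ_top (by omega), ih,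
        Finset.sum_Icc_succ_top (by omega : 1 ≤ n + 1)]
      ring

lemma sum_Icc_pow_le {β : ℝ} (hβ0 : 0 < β) (hβ1 : β < 1) (n : ℕ) :
    ∑ t ∈ Finset.Icc 1 n, β ^ t ≤ 1 / (1 - β) := by
  calc ∑ t ∈ Finset.Icc 1 n, β ^ t ≤ ∑ t ∈ Finset.range (n+1), β ^ t := by
        apply Finset.sum_le_sum_of_subset_of_nonneg
        · intro x hx; simp only [Finset.mem_Icc] at hx; simp only [Finset.mem_range]; omega
        · intros; positivity
    _ ≤ 1 / (1 - β) := by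
        rw [geom_sum_eq (by linarith : β ≠ 1) (n+1)]
        have e : (β ^ (n+1) - 1) / (β - 1) = (1 - β ^ (n+1)) / (1 - β) := by
          rw [div_eq_div_iff (by intro hh; rw [sub_eq_zero] at hh; linarith)
            (by intro hh; rw [sub_eq_zero] at hh; linarith)]
          ring
        rw [e, div_le_div_iff₀ (by linarith) (by linarith)]
        have : 0 < β ^ (n+1) := by positivity
        nlinarith

lemma integrand_bound {C β : ℝ} (hβ : β ∈ Set.Ioo (0:ℝ) 1)
    {h : ℕ → Ω → ℝ} (hh : ∀ t ω, 0 ≤ h t ω ∧ h t ω ≤ C)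
    {lam : Ω → ℝ} (hlam : ∀ ω, 0 ≤ lam ω ∧ lam ω ≤ C) (s' : ℕ) (n : ℕ) (ω : Ω) :
    |∑ t ∈ Finset.Icc 1 n, β ^ t * (h (s' + t) ω - lam ω)| ≤ C / (1 - β) := by
  obtain ⟨hβ0, hβ1⟩ := hβ
  have hC0 : 0 ≤ C := le_trans (hh 0 ω).1 (hh 0 ω).2
  calc |∑ t ∈ Finset.Icc 1 n, β ^ t * (h (s' + t) ω - lam ω)|
      ≤ ∑ t ∈ Finset.Icc 1 n, |β ^ t * (h (s' + t) ω - lam ω)| :=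
        Finset.abs_sum_le_sum_abs _ _
    _ ≤ ∑ t ∈ Finset.Icc 1 n, β ^ t * C := by
        apply Finset.sum_le_sum
        intro t _
        rw [abs_mul, abs_of_pos (by positivity : (0:ℝ) < β ^ t)]
        apply mul_le_mul_of_nonneg_left _ (by positivity)
        rw [abs_le]
        constructor
        · have := (hh (s'+t) ω).1; have := (hlam ω).2; linarith
        · have := (hh (s'+t) ω).2; have := (hlam ω).1; linarith
    _ = (∑ t ∈ Finset.Icc 1 n, β ^ t) * C := by rw [Finset.sum_mul]
    _ ≤ (1 / (1 - β)) * C := by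
        apply mul_le_mul_of_nonneg_right (sum_Icc_pow_le hβ0 hβ1 n) hC0
    _ = C / (1 - β) := by ring

end Aux
section Aux2
set_option linter.unusedSectionVars false

variable {Ω : Type*} [MeasurableSpace Ω] {μ : Measure Ω} {ℱ : ℕ → MeasurableSpace Ω}
  {E : ℕ → (Ω → ℝ) → (Ω → ℝ)} {T : ℕ} {C β : ℝ} {h γ : ℕ → Ω → ℝ}

lemma hitTime_spec (hγC : ∀ t, T ≤ t → ∀ ω, γ t ω = C)
    {lam : Ω → ℝ} (hlam : ∀ ω, lam ω < C) (s' : ℕ) (ω : Ω) :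
    1 ≤ hitTime γ s' lam ω ∧ hitTime γ s' lam ω ≤ max 1 (T - s') ∧
    lam ω < γ (s' + hitTime γ s' lam ω) ω ∧
    ∀ θ, 1 ≤ θ → θ < hitTime γ s' lam ω → ¬ lam ω < γ (s' + θ) ω := by
  have hmem : max 1 (T - s') ∈ {θ : ℕ | 1 ≤ θ ∧ lam ω < γ (s' + θ) ω} := by
    refine ⟨le_max_left _ _, ?_⟩
    rw [hγC _ (by omega) ω]; exact hlam ω
  have hne : {θ : ℕ | 1 ≤ θ ∧ lam ω < γ (s' + θ) ω}.Nonempty := ⟨_, hmem⟩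
  have hs := Nat.sInf_mem hne
  refine ⟨hs.1, Nat.sInf_le hmem, hs.2, ?_⟩
  intro θ h1 h2 hcon
  have : hitTime γ s' lam ω ≤ θ :=
    Nat.sInf_le (show θ ∈ {θ : ℕ | 1 ≤ θ ∧ lam ω < γ (s' + θ) ω} from ⟨h1, hcon⟩)
  omega

lemma hitTime_mem_stopTimes (hℱmono : Monotone ℱ)
    (hγAdapted : ∀ t, Measurable[ℱ t] (γ t)) (hγC : ∀ t, T ≤ t → ∀ ω, γ t ω = C)
    {lam : Ω → ℝ} (hlamC : ∀ ω, lam ω < C) {s' : ℕ} (hlamMeas : Measurable[ℱ s'] lam) :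
    hitTime γ s' lam ∈ stopTimes ℱ s' := by
  refine ⟨fun ω => (hitTime_spec hγC hlamC s' ω).1,
    ⟨max 1 (T - s'), fun ω => (hitTime_spec hγC hlamC s' ω).2.1⟩, ?_⟩
  intro n
  rcases Nat.eq_zero_or_pos n with rfl | hn
  · have he : {ω | hitTime γ s' lam ω = 0} = ∅ := by
      ext ω
      simp only [Set.mem_setOf_eq, Set.mem_empty_iff_false, iff_false]
      have := (hitTime_spec hγC hlamC s' ω).1
      omega
    rw [he]; exact @MeasurableSet.empty _ (ℱ (s' + 0))
  · have he : {ω | hitTime γ s' lam ω = n} =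
        ({ω | lam ω < γ (s' + n) ω} ∩ ⋂ θ ∈ Finset.Ico 1 n, {ω | ¬ lam ω < γ (s' + θ) ω}) := by
      ext ω
      simp only [Set.mem_setOf_eq, Set.mem_inter_iff, Set.mem_iInter, Finset.mem_Ico]
      have hs := hitTime_spec hγC hlamC s' ω
      constructor
      · intro hEq
        rw [hEq] at hs
        exact ⟨hs.2.2.1, fun θ hθ => hs.2.2.2 θ hθ.1 hθ.2⟩
      · rintro ⟨hgt, hmin⟩
        have hle : hitTime γ s' lam ω ≤ n := Nat.sInf_le ⟨hn, hgt⟩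
        by_contra hne
        exact hmin _ ⟨hs.1, by omega⟩ hs.2.2.1
    rw [he]
    have hlamn : Measurable[ℱ (s' + n)] lam :=
      hlamMeas.mono (hℱmono (Nat.le_add_right s' n)) le_rfl
    refine MeasurableSet.inter (measurableSet_lt hlamn ((hγAdapted (s' + n)).mono le_rfl le_rfl)) ?_
    refine Finset.measurableSet_biInter _ ?_
    intro θ hθ
    simp only [Finset.mem_Ico] at hθ
    have h1 : Measurable[ℱ (s' + n)] (γ (s' + θ)) :=
      (hγAdapted (s' + θ)).mono (hℱmono (by omega)) le_rfl
    have : {ω | ¬ lam ω < γ (s' + θ) ω} = {ω | lam ω < γ (s' + θ) ω}ᶜ := rfl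
    rw [this]
    exact (measurableSet_lt hlamn h1).compl

lemma hitTime_rec (hγC : ∀ t, T ≤ t → ∀ ω, γ t ω = C)
    {lam : Ω → ℝ} (hlam : ∀ ω, lam ω < C) (s' : ℕ) (ω : Ω) :
    hitTime γ s' lam ω =
      if lam ω < γ (s' + 1) ω then 1 else hitTime γ (s' + 1) lam ω + 1 := by
  have hs := hitTime_spec hγC hlam s' ω
  have hs' := hitTime_spec hγC hlam (s' + 1) ω
  split_ifs with h1
  · refine le_antisymm (Nat.sInf_le ⟨le_rfl, h1⟩) hs.1
  · refine le_antisymm ?_ ?_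
    · apply Nat.sInf_le
      refine ⟨by omega, ?_⟩
      have := hs'.2.2.1
      rwa [show s' + 1 + hitTime γ (s' + 1) lam ω = s' + (hitTime γ (s' + 1) lam ω + 1) by omega]
        at this
    · have h2 : 2 ≤ hitTime γ s' lam ω := by
        rcases Nat.lt_or_ge (hitTime γ s' lam ω) 2 with hl | hl
        · exfalso
          have he : hitTime γ s' lam ω = 1 := by omega
          rw [he] at hs
          exact h1 hs.2.2.1
        · exact hl
      have hm : hitTime γ (s' + 1) lam ω ≤ hitTime γ s' lam ω - 1 := by
        apply Nat.sInf_le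
        refine ⟨by omega, ?_⟩
        have := hs.2.2.1
        rwa [show s' + hitTime γ s' lam ω = s' + 1 + (hitTime γ s' lam ω - 1) by omega] at this
      omega

lemma shift_mem_stopTimes (hℱmono : Monotone ℱ) {s' : ℕ} {τ : Ω → ℕ}
    (hτ : τ ∈ stopTimes ℱ s') :
    (fun ω => max (τ ω - 1) 1) ∈ stopTimes ℱ (s' + 1) := by
  obtain ⟨h1, ⟨B, hB⟩, hmeas⟩ := hτ
  refine ⟨fun ω => le_max_right _ _, ⟨B, fun ω => by have := hB ω; have := h1 ω; show max (τ ω - 1) 1 ≤ B; omega⟩, ?_⟩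
  intro n
  match n with
  | 0 =>
      have he : {ω | max (τ ω - 1) 1 = 0} = ∅ := by
        ext ω; simp only [Set.mem_setOf_eq, Set.mem_empty_iff_false, iff_false]; omega
      rw [he]; exact @MeasurableSet.empty _ (ℱ (s' + 1 + 0))
  | 1 =>
      have he : {ω | max (τ ω - 1) 1 = 1} = {ω | τ ω = 1} ∪ {ω | τ ω = 2} := by
        ext ω
        simp only [Set.mem_setOf_eq, Set.mem_union]
        have := h1 ω; omega
      rw [he]
      exact MeasurableSet.union (hℱmono (by omega) _ (hmeas 1)) (hmeas 2)
  | (n+2) =>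
      have he : {ω | max (τ ω - 1) 1 = n + 2} = {ω | τ ω = n + 3} := by
        ext ω; simp only [Set.mem_setOf_eq]; omega
      rw [he]
      have := hmeas (n + 3)
      rwa [show s' + (n + 3) = s' + 1 + (n + 2) by omega] at this

end Aux2
section Aux3
set_option linter.unusedSectionVars false

variable {Ω : Type*} [MeasurableSpace Ω] {μ : Measure Ω} {ℱ : ℕ → MeasurableSpace Ω}
  {E : ℕ → (Ω → ℝ) → (Ω → ℝ)} {T : ℕ} {C β : ℝ} {h γ : ℕ → Ω → ℝ}
  {Vinf : ℕ → (Ω → ℝ) → Ω → ℝ}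

/-- Locality of the value in `λ`. -/
lemma banditV_local (hE : ConsistentCNE μ ℱ E) {s' : ℕ} {A : Set Ω}
    (hA : MeasurableSet[ℱ s'] A) {lam1 lam2 : Ω → ℝ} (hl : ∀ ω ∈ A, lam1 ω = lam2 ω)
    (τ : Ω → ℕ) :
    ∀ᵐ ω ∂μ, ω ∈ A → banditV E h β s' τ lam1 ω = banditV E h β s' τ lam2 ω := by
  classical
  set g : Ω → ℝ := fun ω => if ω ∈ A then 1 else 0 with hgdef
  have hg : Measurable[ℱ s'] g := Measurable.ite hA measurable_const measurable_const
  have hg0 : ∀ᵐ ω ∂μ, 0 ≤ g ω :=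
    Filter.Eventually.of_forall fun ω => by by_cases hω : ω ∈ A <;> simp [hgdef, hω]
  set X1 : Ω → ℝ := fun ω => ∑ t ∈ Finset.Icc 1 (τ ω), β ^ t * (h (s' + t) ω - lam1 ω)
  set X2 : Ω → ℝ := fun ω => ∑ t ∈ Finset.Icc 1 (τ ω), β ^ t * (h (s' + t) ω - lam2 ω)
  have h1 := hE.posHom s' X1 g hg hg0
  have h2 := hE.posHom s' X2 g hg hg0
  have hXX : (fun ω => g ω * X1 ω) = fun ω => g ω * X2 ω := by
    funext ω
    by_cases hω : ω ∈ A
    · simp only [hgdef, if_pos hω, X1, X2, hl ω hω]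
    · simp [hgdef, if_neg hω]
  rw [hXX] at h1
  filter_upwards [h1, h2] with ω e1 e2 hω
  have hg1 : g ω = 1 := if_pos hω
  have : g ω * E s' X1 ω = g ω * E s' X2 ω := e1.symm.trans e2
  rw [hg1, one_mul, one_mul] at this
  exact this

lemma banditV_abs_bound (hE : ConsistentCNE μ ℱ E) (hβ : β ∈ Set.Ioo (0:ℝ) 1)
    (hh : ∀ t ω, 0 ≤ h t ω ∧ h t ω ≤ C)
    {lam : Ω → ℝ} (hlam : ∀ ω, 0 ≤ lam ω ∧ lam ω ≤ C) (s' : ℕ) (τ : Ω → ℕ) :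
    ∀ᵐ ω ∂μ, |banditV E h β s' τ lam ω| ≤ C / (1 - β) :=
  hE.aeAbsLe s' (Filter.Eventually.of_forall fun ω => integrand_bound hβ hh hlam s' (τ ω) ω)

/-- Fact (ii): on `{γ s' ≤ λ}`, `Vinf s' λ ≤ 0` a.e. -/
lemma Vinf_nonpos (hE : ConsistentCNE μ ℱ E) (hβ : β ∈ Set.Ioo (0:ℝ) 1)
    (hh : ∀ t ω, 0 ≤ h t ω ∧ h t ω ≤ C)
    (hVinfMeas : ∀ s' lam, Measurable[ℱ s'] (Vinf s' lam))
    (hVinfLB : ∀ s' lam, ∀ τ ∈ stopTimes ℱ s',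
      Vinf s' lam ≤ᵐ[μ] banditV E h β s' τ lam)
    (hVinfGreatest : ∀ s' (lam Z : Ω → ℝ), Measurable[ℱ s'] Z →
      (∀ τ ∈ stopTimes ℱ s', Z ≤ᵐ[μ] banditV E h β s' τ lam) →
      Z ≤ᵐ[μ] Vinf s' lam)
    (hγAdapted : ∀ t, Measurable[ℱ t] (γ t)) (hγ : ∀ t ω, 0 ≤ γ t ω ∧ γ t ω ≤ C)
    (hknown : ∀ s', Vinf s' (γ s') =ᵐ[μ] 0)
    {s' : ℕ} {lam : Ω → ℝ} (hlamMeas : Measurable[ℱ s'] lam)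
    (hlamB : ∀ ω, 0 ≤ lam ω ∧ lam ω ≤ C) :
    ∀ᵐ ω ∂μ, γ s' ω ≤ lam ω → Vinf s' lam ω ≤ 0 := by
  classical
  set B : Set Ω := {ω | γ s' ω ≤ lam ω} with hBdef
  have hB : MeasurableSet[ℱ s'] B := measurableSet_le (hγAdapted s') hlamMeas
  set lam'' : Ω → ℝ := fun ω => max (lam ω) (γ s' ω) with hl''def
  set Z : Ω → ℝ := fun ω => if ω ∈ B then Vinf s' lam ω else -(C / (1 - β)) with hZdef
  have hZmeas : Measurable[ℱ s'] Z :=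
    Measurable.ite hB (hVinfMeas s' lam) measurable_const
  have hZ : ∀ τ ∈ stopTimes ℱ s', Z ≤ᵐ[μ] banditV E h β s' τ (γ s') := by
    intro τ hτ
    have hloc := banditV_local (h := h) (β := β) hE hB
      (fun ω hω => (max_eq_left (hω : γ s' ω ≤ lam ω)).symm) τ
    have hmono : banditV E h β s' τ lam'' ≤ᵐ[μ] banditV E h β s' τ (γ s') := by
      apply hE.mono
      apply Filter.Eventually.of_forall
      intro ω
      apply Finset.sum_le_sum
      intro t _
      have h1 : γ s' ω ≤ lam'' ω := le_max_right _ _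
      have h2 : (0:ℝ) < β ^ t := pow_pos hβ.1 t
      nlinarith
    have hbd := banditV_abs_bound (h := h) hE hβ hh (fun ω => hγ s' ω) s' τ
    have hVl := hVinfLB s' lam τ hτ
    filter_upwards [hloc, hmono, hbd, hVl] with ω hloc hmono hbd hVl
    by_cases hω : ω ∈ B
    · rw [hZdef]
      simp only [if_pos hω]
      calc Vinf s' lam ω ≤ banditV E h β s' τ lam ω := hVl
        _ = banditV E h β s' τ lam'' ω := hloc hω
        _ ≤ banditV E h β s' τ (γ s') ω := hmono
    · rw [hZdef]
      simp only [if_neg hω]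
      linarith [(abs_le.1 hbd).1]
  have hfin := hVinfGreatest s' (γ s') Z hZmeas hZ
  filter_upwards [hfin, hknown s'] with ω h1 h2 hω
  have he : Z ω = Vinf s' lam ω := if_pos (hω : ω ∈ B)
  rw [he] at h1
  rw [h2] at h1
  exact h1

/-- Fact (i): on `{λ < γ s'}`, `0 ≤ Vinf s' λ` a.e. -/
lemma Vinf_nonneg (hE : ConsistentCNE μ ℱ E) (hβ : β ∈ Set.Ioo (0:ℝ) 1)
    (hC : 0 < C) (hh : ∀ t ω, 0 ≤ h t ω ∧ h t ω ≤ C)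
    (hVinfMeas : ∀ s' lam, Measurable[ℱ s'] (Vinf s' lam))
    (hVinfLB : ∀ s' lam, ∀ τ ∈ stopTimes ℱ s',
      Vinf s' lam ≤ᵐ[μ] banditV E h β s' τ lam)
    (hVinfGreatest : ∀ s' (lam Z : Ω → ℝ), Measurable[ℱ s'] Z →
      (∀ τ ∈ stopTimes ℱ s', Z ≤ᵐ[μ] banditV E h β s' τ lam) →
      Z ≤ᵐ[μ] Vinf s' lam)
    (hγAdapted : ∀ t, Measurable[ℱ t] (γ t)) (hγ : ∀ t ω, 0 ≤ γ t ω ∧ γ t ω ≤ C)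
    (hγLB : ∀ s', ∀ lam : Ω → ℝ, Measurable[ℱ s'] lam →
      (∃ K, ∀ ω, |lam ω| ≤ K) → Vinf s' lam ≤ᵐ[μ] 0 → γ s' ≤ᵐ[μ] lam)
    (hknown : ∀ s', Vinf s' (γ s') =ᵐ[μ] 0)
    {s' : ℕ} {lam : Ω → ℝ} (hlamMeas : Measurable[ℱ s'] lam)
    (hlamB : ∀ ω, 0 ≤ lam ω ∧ lam ω ≤ C) :
    ∀ᵐ ω ∂μ, lam ω < γ s' ω → 0 ≤ Vinf s' lam ω := by
  classical
  set A : Set Ω := {ω | Vinf s' lam ω < 0} with hAdef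
  have hA : MeasurableSet[ℱ s'] A := measurableSet_lt (hVinfMeas s' lam) measurable_const
  set lam' : Ω → ℝ := fun ω => if ω ∈ A then lam ω else γ s' ω with hl'def
  have hl'meas : Measurable[ℱ s'] lam' := Measurable.ite hA hlamMeas (hγAdapted s')
  have hl'B : ∀ ω, 0 ≤ lam' ω ∧ lam' ω ≤ C := by
    intro ω
    rw [hl'def]
    by_cases hω : ω ∈ A
    · simp only [if_pos hω]; exact hlamB ω
    · simp only [if_neg hω]; exact hγ s' ω
  -- Z1 : on A, Vinf lam' ≤ Vinf lam
  have hZ1 : ∀ᵐ ω ∂μ, ω ∈ A → Vinf s' lam' ω ≤ Vinf s' lam ω := by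
    set Z1 : Ω → ℝ := fun ω => if ω ∈ A then Vinf s' lam' ω else -(C / (1 - β)) with hZ1def
    have hZ1meas : Measurable[ℱ s'] Z1 :=
      Measurable.ite hA (hVinfMeas s' lam') measurable_const
    have hle : ∀ τ ∈ stopTimes ℱ s', Z1 ≤ᵐ[μ] banditV E h β s' τ lam := by
      intro τ hτ
      have hloc := banditV_local (h := h) (β := β) hE hA
        (fun ω hω => (if_pos hω : lam' ω = lam ω)) τ
      have hbd := banditV_abs_bound (h := h) hE hβ hh hlamB s' τ
      have hVl' := hVinfLB s' lam' τ hτ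
      filter_upwards [hloc, hbd, hVl'] with ω hloc hbd hVl'
      rw [hZ1def]
      by_cases hω : ω ∈ A
      · simp only [if_pos hω]
        calc Vinf s' lam' ω ≤ banditV E h β s' τ lam' ω := hVl'
          _ = banditV E h β s' τ lam ω := hloc hω
      · simp only [if_neg hω]
        linarith [(abs_le.1 hbd).1]
    have := hVinfGreatest s' lam Z1 hZ1meas hle
    filter_upwards [this] with ω hω hmem
    have he : Z1 ω = Vinf s' lam' ω := if_pos hmem
    rw [he] at hω
    exact hω
  -- Z2 : off A, Vinf lam' ≤ Vinf (γ s')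
  have hZ2 : ∀ᵐ ω ∂μ, ω ∉ A → Vinf s' lam' ω ≤ Vinf s' (γ s') ω := by
    set Z2 : Ω → ℝ := fun ω => if ω ∈ A then -(C / (1 - β)) else Vinf s' lam' ω with hZ2def
    have hZ2meas : Measurable[ℱ s'] Z2 :=
      Measurable.ite hA measurable_const (hVinfMeas s' lam')
    have hle : ∀ τ ∈ stopTimes ℱ s', Z2 ≤ᵐ[μ] banditV E h β s' τ (γ s') := by
      intro τ hτ
      have hloc := banditV_local (h := h) (β := β) hE hA.compl
        (fun ω hω => (if_neg hω : lam' ω = γ s' ω)) τ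
      have hbd := banditV_abs_bound (h := h) hE hβ hh (fun ω => hγ s' ω) s' τ
      have hVl' := hVinfLB s' lam' τ hτ
      filter_upwards [hloc, hbd, hVl'] with ω hloc hbd hVl'
      rw [hZ2def]
      by_cases hω : ω ∈ A
      · simp only [if_pos hω]
        linarith [(abs_le.1 hbd).1]
      · simp only [if_neg hω]
        calc Vinf s' lam' ω ≤ banditV E h β s' τ lam' ω := hVl'
          _ = banditV E h β s' τ (γ s') ω := hloc hω
    have := hVinfGreatest s' (γ s') Z2 hZ2meas hle
    filter_upwards [this] with ω hω hmem
    have he : Z2 ω = Vinf s' lam' ω := if_neg hmem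
    rw [he] at hω
    exact hω
  have hstep : Vinf s' lam' ≤ᵐ[μ] 0 := by
    filter_upwards [hZ1, hZ2, hknown s'] with ω h1 h2 h3
    by_cases hω : ω ∈ A
    · have := h1 hω
      have hneg : Vinf s' lam ω < 0 := hω
      show Vinf s' lam' ω ≤ 0
      linarith
    · have := h2 hω
      show Vinf s' lam' ω ≤ 0
      rw [h3] at this
      exact this
  have hγle := hγLB s' lam' hl'meas
    ⟨C, fun ω => abs_le.2 ⟨by linarith [(hl'B ω).1], (hl'B ω).2⟩⟩ hstep
  filter_upwards [hγle] with ω hγle hlt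
  by_contra hneg
  have hωA : ω ∈ A := by
    show Vinf s' lam ω < 0
    linarith [lt_of_not_ge hneg]
  rw [hl'def] at hγle
  simp only [if_pos hωA] at hγle
  exact absurd hγle (not_le.2 hlt)
end Aux3
section Aux4
set_option linter.unusedSectionVars false
set_option maxHeartbeats 1000000

variable {Ω : Type*} [MeasurableSpace Ω] {μ : Measure Ω} {ℱ : ℕ → MeasurableSpace Ω}
  {E : ℕ → (Ω → ℝ) → (Ω → ℝ)} {T : ℕ} {C β : ℝ} {h γ : ℕ → Ω → ℝ}
  {Vinf : ℕ → (Ω → ℝ) → Ω → ℝ}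

lemma stepLemma
    (hℱmono : Monotone ℱ) (hE : ConsistentCNE μ ℱ E) (hC : 0 < C)
    (hβ : β ∈ Set.Ioo (0:ℝ) 1)
    (hhAdapted : ∀ t, Measurable[ℱ t] (h t)) (hh : ∀ t ω, 0 ≤ h t ω ∧ h t ω ≤ C)
    (hVinfMeas : ∀ s' lam, Measurable[ℱ s'] (Vinf s' lam))
    (hVinfLB : ∀ s' lam, ∀ τ ∈ stopTimes ℱ s',
      Vinf s' lam ≤ᵐ[μ] banditV E h β s' τ lam)
    (hVinfGreatest : ∀ s' (lam Z : Ω → ℝ), Measurable[ℱ s'] Z →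
      (∀ τ ∈ stopTimes ℱ s', Z ≤ᵐ[μ] banditV E h β s' τ lam) →
      Z ≤ᵐ[μ] Vinf s' lam)
    (hγAdapted : ∀ t, Measurable[ℱ t] (γ t)) (hγ : ∀ t ω, 0 ≤ γ t ω ∧ γ t ω ≤ C)
    (hγC : ∀ t, T ≤ t → ∀ ω, γ t ω = C)
    (hγLB : ∀ s', ∀ lam : Ω → ℝ, Measurable[ℱ s'] lam →
      (∃ K, ∀ ω, |lam ω| ≤ K) → Vinf s' lam ≤ᵐ[μ] 0 → γ s' ≤ᵐ[μ] lam)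
    (hknown : ∀ s', Vinf s' (γ s') =ᵐ[μ] 0)
    (s' : ℕ) {lam : Ω → ℝ} (hlamMeas : Measurable[ℱ s'] lam)
    (hlam : ∀ ω, 0 ≤ lam ω ∧ lam ω < C)
    (H : ∀ᵐ ω ∂μ, γ (s'+1) ω ≤ lam ω →
      banditV E h β (s'+1) (hitTime γ (s'+1) lam) lam ω = Vinf (s'+1) lam ω) :
    (∀ τ ∈ stopTimes ℱ s',
      banditV E h β s' (hitTime γ s' lam) lam ≤ᵐ[μ] banditV E h β s' τ lam) ∧
    banditV E h β s' (hitTime γ s' lam) lam =ᵐ[μ] Vinf s' lam := by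
  classical
  have hlamC : ∀ ω, lam ω < C := fun ω => (hlam ω).2
  have hlamB : ∀ ω, 0 ≤ lam ω ∧ lam ω ≤ C := fun ω => ⟨(hlam ω).1, (hlam ω).2.le⟩
  have hlam1 : Measurable[ℱ (s'+1)] lam := hlamMeas.mono (hℱmono (Nat.le_succ s')) le_rfl
  set G : Ω → ℝ := fun ω => β * (h (s'+1) ω - lam ω) with hGdef
  have hGmeas : Measurable[ℱ (s'+1)] G := ((hhAdapted (s'+1)).sub hlam1).const_mul β
  set B : Set Ω := {ω | γ (s'+1) ω ≤ lam ω} with hBdef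
  have hBmeas : MeasurableSet[ℱ (s'+1)] B := measurableSet_le (hγAdapted (s'+1)) hlam1
  -- generic pasting computation
  have pasteV : ∀ (A : Set Ω), MeasurableSet[ℱ (s'+1)] A → ∀ ρ : Ω → ℕ,
      banditV E h β s' (fun ω => if ω ∈ A then ρ ω + 1 else 1) lam =ᵐ[μ]
      E s' (fun ω => (if ω ∈ A then β else 0) * banditV E h β (s'+1) ρ lam ω + G ω) := by
    intro A hA ρ
    set g : Ω → ℝ := fun ω => if ω ∈ A then β else 0 with hgdef
    have hgmeas : Measurable[ℱ (s'+1)] g :=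
      Measurable.ite hA measurable_const measurable_const
    have hg0 : ∀ᵐ ω ∂μ, 0 ≤ g ω := Filter.Eventually.of_forall fun ω => by
      by_cases hω : ω ∈ A <;> simp [hgdef, hω] <;> linarith [hβ.1]
    set SR : Ω → ℝ := fun ω => ∑ t ∈ Finset.Icc 1 (ρ ω), β ^ t * (h (s'+1+t) ω - lam ω)
      with hSRdef
    have hdecomp : (fun ω => ∑ t ∈ Finset.Icc 1 ((if ω ∈ A then ρ ω + 1 else 1 : ℕ)),
          β ^ t * (h (s' + t) ω - lam ω)) = fun ω => g ω * SR ω + G ω := by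
      funext ω
      by_cases hω : ω ∈ A
      · simp only [if_pos hω, hgdef]
        rw [sum_Icc_shift]
        have hterm : ∀ t ∈ Finset.Icc 1 (ρ ω),
            β ^ (t+1) * (h (s' + (t+1)) ω - lam ω)
              = β * (β ^ t * (h (s'+1+t) ω - lam ω)) := by
          intro t _
          rw [show s' + (t+1) = s'+1+t by omega]
          ring
        rw [Finset.sum_congr rfl hterm, ← Finset.mul_sum]
        simp only [hSRdef, hGdef, pow_one]
        ring
      · simp only [if_neg hω, hgdef]
        rw [Finset.Icc_self, Finset.sum_singleton]
        simp only [hGdef, pow_one]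
        ring
    have e0 : banditV E h β s' (fun ω => if ω ∈ A then ρ ω + 1 else 1) lam
        = E s' (fun ω => g ω * SR ω + G ω) := congrArg (E s') hdecomp
    have etower := hE.tower s' (s'+1) (fun ω => g ω * SR ω + G ω) (Nat.le_succ s')
    have e1 := hE.transl (s'+1) (fun ω => g ω * SR ω) G hGmeas
    have e2 := hE.posHom (s'+1) SR g hgmeas hg0
    have einner : E (s'+1) (fun ω => g ω * SR ω + G ω) =ᵐ[μ]
        fun ω => g ω * banditV E h β (s'+1) ρ lam ω + G ω := by
      refine e1.trans ?_
      filter_upwards [e2] with ω he2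
      try dsimp only
      rw [he2]
      rfl
    rw [e0]
    exact etower.trans (hE.aeeq einner)
  have hσmem : hitTime γ s' lam ∈ stopTimes ℱ s' :=
    hitTime_mem_stopTimes hℱmono hγAdapted hγC hlamC hlamMeas
  have hσeq : hitTime γ s' lam = fun ω => if ω ∈ B then hitTime γ (s'+1) lam ω + 1 else 1 := by
    funext ω
    rw [hitTime_rec hγC hlamC s' ω]
    by_cases hω : ω ∈ B
    · rw [if_neg (not_lt.2 hω), if_pos hω]
    · rw [if_pos (not_le.1 hω), if_neg hω]
  have hVσ1 : banditV E h β s' (hitTime γ s' lam) lam =ᵐ[μ]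
      E s' (fun ω => (if ω ∈ B then β else 0)
        * banditV E h β (s'+1) (hitTime γ (s'+1) lam) lam ω + G ω) := by
    rw [hσeq]
    exact pasteV B hBmeas (hitTime γ (s'+1) lam)
  have hii := Vinf_nonpos hE hβ hh hVinfMeas hVinfLB hVinfGreatest hγAdapted hγ
    hknown (s' := s'+1) hlam1 hlamB
  have hi := Vinf_nonneg hE hβ hC hh hVinfMeas hVinfLB hVinfGreatest hγAdapted hγ
    hγLB hknown (s' := s'+1) hlam1 hlamB
  have hkey : (fun ω => (if ω ∈ B then β else 0)
        * banditV E h β (s'+1) (hitTime γ (s'+1) lam) lam ω + G ω) =ᵐ[μ]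
      fun ω => β * min 0 (Vinf (s'+1) lam ω) + G ω := by
    filter_upwards [H, hii, hi] with ω hH hii hi
    try dsimp only
    by_cases hω : ω ∈ B
    · rw [if_pos hω, hH hω, min_eq_right (hii hω)]
    · rw [if_neg hω, min_eq_left (hi (not_le.1 hω)), mul_zero, zero_mul]
  have hVσ : banditV E h β s' (hitTime γ s' lam) lam =ᵐ[μ]
      E s' (fun ω => β * min 0 (Vinf (s'+1) lam ω) + G ω) := hVσ1.trans (hE.aeeq hkey)
  have hmain : ∀ τ ∈ stopTimes ℱ s',
      banditV E h β s' (hitTime γ s' lam) lam ≤ᵐ[μ] banditV E h β s' τ lam := by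
    intro τ hτ
    obtain ⟨hτ1, hτB, hτmeas⟩ := hτ
    set τ' : Ω → ℕ := fun ω => max (τ ω - 1) 1 with hτ'def
    have hτ'mem : τ' ∈ stopTimes ℱ (s'+1) := shift_mem_stopTimes hℱmono ⟨hτ1, hτB, hτmeas⟩
    set A : Set Ω := {ω | τ ω = 1}ᶜ with hAdef
    have hAmeas : MeasurableSet[ℱ (s'+1)] A := (hτmeas 1).compl
    have hAspec : ∀ ω, ω ∈ A ↔ τ ω ≠ 1 := fun ω => Iff.rfl
    clear_value A
    have hτeq : τ = fun ω => if ω ∈ A then τ' ω + 1 else 1 := by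
      funext ω
      by_cases hω : ω ∈ A
      · rw [if_pos hω]
        have h2 : τ ω ≠ 1 := (hAspec ω).1 hω
        have h3 := hτ1 ω
        simp only [hτ'def]
        omega
      · rw [if_neg hω]
        by_contra hne
        exact hω ((hAspec ω).2 hne)
    have hVτ : banditV E h β s' τ lam =ᵐ[μ]
        E s' (fun ω => (if ω ∈ A then β else 0)
          * banditV E h β (s'+1) τ' lam ω + G ω) := by
      conv_lhs => rw [hτeq]
      exact pasteV A hAmeas τ'
    have hcomp : (fun ω => β * min 0 (Vinf (s'+1) lam ω) + G ω) ≤ᵐ[μ]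
        fun ω => (if ω ∈ A then β else 0) * banditV E h β (s'+1) τ' lam ω + G ω := by
      filter_upwards [hVinfLB (s'+1) lam τ' hτ'mem] with ω hV
      try dsimp only
      by_cases hω : ω ∈ A
      · rw [if_pos hω]
        have h1 : min 0 (Vinf (s'+1) lam ω) ≤ banditV E h β (s'+1) τ' lam ω :=
          le_trans (min_le_right _ _) hV
        have h2 := hβ.1
        nlinarith
      · rw [if_neg hω, zero_mul]
        have h1 : min 0 (Vinf (s'+1) lam ω) ≤ 0 := min_le_left _ _
        nlinarith [hβ.1]
    exact hVσ.le.trans ((hE.mono s' _ _ hcomp).trans hVτ.symm.le)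
  refine ⟨hmain, ?_⟩
  exact (hVinfGreatest s' lam _ (hE.adapted s' _) hmain).antisymm (hVinfLB s' lam _ hσmem)

end Aux4
section Aux5
set_option linter.unusedSectionVars false
set_option maxHeartbeats 1000000

variable {Ω : Type*} [MeasurableSpace Ω] {μ : Measure Ω} {ℱ : ℕ → MeasurableSpace Ω}
  {E : ℕ → (Ω → ℝ) → (Ω → ℝ)} {T : ℕ} {C β : ℝ} {h γ : ℕ → Ω → ℝ}
  {Vinf : ℕ → (Ω → ℝ) → Ω → ℝ}

lemma masterLemma
    (hℱmono : Monotone ℱ) (hE : ConsistentCNE μ ℱ E) (hC : 0 < C)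
    (hβ : β ∈ Set.Ioo (0:ℝ) 1)
    (hhAdapted : ∀ t, Measurable[ℱ t] (h t)) (hh : ∀ t ω, 0 ≤ h t ω ∧ h t ω ≤ C)
    (hVinfMeas : ∀ s' lam, Measurable[ℱ s'] (Vinf s' lam))
    (hVinfLB : ∀ s' lam, ∀ τ ∈ stopTimes ℱ s',
      Vinf s' lam ≤ᵐ[μ] banditV E h β s' τ lam)
    (hVinfGreatest : ∀ s' (lam Z : Ω → ℝ), Measurable[ℱ s'] Z →
      (∀ τ ∈ stopTimes ℱ s', Z ≤ᵐ[μ] banditV E h β s' τ lam) →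
      Z ≤ᵐ[μ] Vinf s' lam)
    (hγAdapted : ∀ t, Measurable[ℱ t] (γ t)) (hγ : ∀ t ω, 0 ≤ γ t ω ∧ γ t ω ≤ C)
    (hγC : ∀ t, T ≤ t → ∀ ω, γ t ω = C)
    (hγLB : ∀ s', ∀ lam : Ω → ℝ, Measurable[ℱ s'] lam →
      (∃ K, ∀ ω, |lam ω| ≤ K) → Vinf s' lam ≤ᵐ[μ] 0 → γ s' ≤ᵐ[μ] lam)
    (hknown : ∀ s', Vinf s' (γ s') =ᵐ[μ] 0) :
    ∀ (n s' : ℕ) (lam : Ω → ℝ), T ≤ s' + n → Measurable[ℱ s'] lam →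
      (∀ ω, 0 ≤ lam ω ∧ lam ω < C) →
    (∀ τ ∈ stopTimes ℱ s',
      banditV E h β s' (hitTime γ s' lam) lam ≤ᵐ[μ] banditV E h β s' τ lam) ∧
    banditV E h β s' (hitTime γ s' lam) lam =ᵐ[μ] Vinf s' lam := by
  intro n
  induction n with
  | zero =>
      intro s' lam hT hm hb
      refine stepLemma hℱmono hE hC hβ hhAdapted hh hVinfMeas hVinfLB hVinfGreatest
        hγAdapted hγ hγC hγLB hknown s' hm hb ?_
      apply Filter.Eventually.of_forall
      intro ω hω
      exfalso
      rw [hγC (s'+1) (by omega) ω] at hω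
      exact absurd hω (not_le.2 (hb ω).2)
  | succ n ih =>
      intro s' lam hT hm hb
      have prev := ih (s'+1) lam (by omega) (hm.mono (hℱmono (Nat.le_succ s')) le_rfl) hb
      refine stepLemma hℱmono hE hC hβ hhAdapted hh hVinfMeas hVinfLB hVinfGreatest
        hγAdapted hγ hγC hγLB hknown s' hm hb ?_
      filter_upwards [prev.2] with ω hω _
      exact hω

end Aux5

/-- **Theorem 4.2.**  For every `λ ∈ L^∞(ℱ_s)` with values in `[0,C)`, the
hitting time `σ(s,λ) = inf {θ ≥ 1 : γ(s+θ) > λ}` is a bounded positive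
stopping time attaining the optimal stopping value:
`V(σ(s,λ), λ) ≤ V(τ, λ)` for every `τ ∈ 𝒯(s)` (so `V(σ(s,λ),λ)` is the
essential infimum); in particular `V(σ(s,γ(s)), γ(s)) = 0`.
Here `Vinf s' λ` denotes the `ℱ_{s'}`-essential infimum of
`{V(τ,λ) : τ ∈ 𝒯(s')}` and `γ s'` the robust Gittins index, i.e. the
`ℱ_{s'}`-essential infimum of `{λ : Vinf s' λ ≤ 0 a.s.}`; it is known
(Theorem 4.1) that `Vinf s' (γ s') = 0` a.s. -/
theorem stmt7 (μ : Measure Ω) [IsProbabilityMeasure μ]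
    (ℱ : ℕ → MeasurableSpace Ω) (hℱmono : Monotone ℱ)
    (hℱle : ∀ t, ℱ t ≤ ‹MeasurableSpace Ω›)
    (E : ℕ → (Ω → ℝ) → (Ω → ℝ)) (hE : ConsistentCNE μ ℱ E)
    (T : ℕ) (C : ℝ) (hC : 0 < C) (β : ℝ) (hβ : β ∈ Set.Ioo (0 : ℝ) 1)
    (h : ℕ → Ω → ℝ) (hhAdapted : ∀ t, Measurable[ℱ t] (h t))
    (hhBdd : ∀ t, t ≤ T → ∀ ω, 0 ≤ h t ω ∧ h t ω < C)
    (hhC : ∀ t, T < t → ∀ ω, h t ω = C)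
    -- `Vinf s' λ` is the `ℱ_{s'}`-essential infimum of `{V(τ,λ) : τ ∈ 𝒯(s')}`
    (Vinf : ℕ → (Ω → ℝ) → Ω → ℝ)
    (hVinfMeas : ∀ s' lam, Measurable[ℱ s'] (Vinf s' lam))
    (hVinfLB : ∀ s' lam, ∀ τ ∈ stopTimes ℱ s',
      Vinf s' lam ≤ᵐ[μ] banditV E h β s' τ lam)
    (hVinfGreatest : ∀ s' (lam Z : Ω → ℝ), Measurable[ℱ s'] Z →
      (∀ τ ∈ stopTimes ℱ s', Z ≤ᵐ[μ] banditV E h β s' τ lam) →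
      Z ≤ᵐ[μ] Vinf s' lam)
    -- the robust Gittins index process, through its defining properties
    (γ : ℕ → Ω → ℝ) (hγAdapted : ∀ t, Measurable[ℱ t] (γ t))
    (hγBdd : ∀ t, t < T → ∀ ω, 0 ≤ γ t ω ∧ γ t ω < C)
    (hγC : ∀ t, T ≤ t → ∀ ω, γ t ω = C)
    (hγLB : ∀ s', ∀ lam : Ω → ℝ, Measurable[ℱ s'] lam →
      (∃ K, ∀ ω, |lam ω| ≤ K) → Vinf s' lam ≤ᵐ[μ] 0 → γ s' ≤ᵐ[μ] lam)
    (hγGreatest : ∀ s', ∀ Z : Ω → ℝ, Measurable[ℱ s'] Z →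
      (∀ lam : Ω → ℝ, Measurable[ℱ s'] lam → (∃ K, ∀ ω, |lam ω| ≤ K) →
        Vinf s' lam ≤ᵐ[μ] 0 → Z ≤ᵐ[μ] lam) → Z ≤ᵐ[μ] γ s')
    -- known (Theorem 4.1): `essinf_τ V(τ, γ(s')) = 0` a.s.
    (hknown : ∀ s', Vinf s' (γ s') =ᵐ[μ] 0)
    (s : ℕ) (lam : Ω → ℝ) (hlamMeas : Measurable[ℱ s] lam)
    (hlam : ∀ ω, 0 ≤ lam ω ∧ lam ω < C) :
    hitTime γ s lam ∈ stopTimes ℱ s ∧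
    (∀ τ ∈ stopTimes ℱ s,
      banditV E h β s (hitTime γ s lam) lam ≤ᵐ[μ] banditV E h β s τ lam) ∧
    banditV E h β s (hitTime γ s lam) lam =ᵐ[μ] Vinf s lam ∧
    banditV E h β s (hitTime γ s (γ s)) (γ s) =ᵐ[μ] 0 := by
  have hh : ∀ t ω, 0 ≤ h t ω ∧ h t ω ≤ C := by
    intro t ω
    rcases le_or_gt t T with ht | ht
    · exact ⟨(hhBdd t ht ω).1, (hhBdd t ht ω).2.le⟩
    · rw [hhC t ht ω]; exact ⟨hC.le, le_rfl⟩
  have hγb : ∀ t ω, 0 ≤ γ t ω ∧ γ t ω ≤ C := by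
    intro t ω
    rcases Nat.lt_or_ge t T with ht | ht
    · exact ⟨(hγBdd t ht ω).1, (hγBdd t ht ω).2.le⟩
    · rw [hγC t ht ω]; exact ⟨hC.le, le_rfl⟩
  have master := masterLemma hℱmono hE hC hβ hhAdapted hh hVinfMeas hVinfLB
    hVinfGreatest hγAdapted hγb hγC hγLB hknown
  have hmem : hitTime γ s lam ∈ stopTimes ℱ s :=
    hitTime_mem_stopTimes hℱmono hγAdapted hγC (fun ω => (hlam ω).2) hlamMeas
  obtain ⟨h1, h2⟩ := master T s lam (by omega) hlamMeas hlam
  refine ⟨hmem, h1, h2, ?_⟩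
  rcases Nat.lt_or_ge s T with hsT | hsT
  · have := (master T s (γ s) (by omega) (hγAdapted s) (fun ω => hγBdd s hsT ω)).2
    exact this.trans (hknown s)
  · -- here `γ s = C` and the hitting time is `sInf ∅ = 0`
    have hempty : ∀ ω, hitTime γ s (γ s) ω = 0 := by
      intro ω
      have he : {θ : ℕ | 1 ≤ θ ∧ γ s ω < γ (s + θ) ω} = ∅ := by
        ext θ
        simp only [Set.mem_setOf_eq, Set.mem_empty_iff_false, iff_false, not_and]
        intro hθ
        rw [hγC s hsT ω, hγC (s + θ) (by omega) ω]
        exact lt_irrefl C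
      show sInf {θ : ℕ | 1 ≤ θ ∧ γ s ω < γ (s + θ) ω} = 0
      rw [he, Nat.sInf_empty]
    have hzero : (fun ω => ∑ t ∈ Finset.Icc 1 (hitTime γ s (γ s) ω),
        β ^ t * (h (s + t) ω - γ s ω)) = fun _ => (0:ℝ) := by
      funext ω
      rw [hempty ω]
      simp
    show E s (fun ω => ∑ t ∈ Finset.Icc 1 (hitTime γ s (γ s) ω),
        β ^ t * (h (s + t) ω - γ s ω)) =ᵐ[μ] 0
    rw [hzero]
    exact hE.normalized s
end

section
/- Define the prevailing reward process $\Gamma(t) := \max_{0 \le \theta \le t-1} \gamma(\theta)$ and let $\hat{S}_n$ be the successive times at which the Gittins index process $\gamma$ strictly exceeds its running maximum. Then for all $n$, $\mathcal{E}(\sum_{t = \hat{S}_n + 1}^{T} \beta^t (h(t) - \Gamma(t)) \mid \mathcal{F}_{\hat{S}_n}) = 0$; in particular $\mathcal{E}(\sum_{t=1}^{T} \beta^t (h(t) - \Gamma(t))) = 0$. -/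
open MeasureTheory Filter Classical Finset

variable {Ω : Type*} [MeasurableSpace Ω]

/-- The prevailing reward process `Γ(t) = max_{0 ≤ θ ≤ t-1} γ(θ)`
(Definition 4.3). -/
noncomputable def prevailing (γ : ℕ → Ω → ℝ) (t : ℕ) : Ω → ℝ :=
  fun ω => (Finset.Icc 0 (t - 1)).sup'
    (Finset.nonempty_Icc.mpr (Nat.zero_le _)) (fun θ => γ θ ω)

/-- The successive times `Ŝ_n` at which the Gittins index process `γ` strictly
exceeds its running maximum (Definition 4.2): `Ŝ_0 = 0`,
`Ŝ_{n+1} = Ŝ_n + σ_n` with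
`σ_n = inf {θ ≥ 1 : γ(Ŝ_n + θ) > γ(Ŝ_n)}` when `γ(Ŝ_n) < C`, else `σ_n = 0`. -/
noncomputable def Shat (γ : ℕ → Ω → ℝ) (C : ℝ) : ℕ → Ω → ℕ
  | 0, _ => 0
  | n + 1, ω =>
    Shat γ C n ω +
      (if γ (Shat γ C n ω) ω < C then
        sInf {θ : ℕ | 1 ≤ θ ∧ γ (Shat γ C n ω) ω < γ (Shat γ C n ω + θ) ω}
      else 0)

section Struct

variable {γ : ℕ → Ω → ℝ} {C : ℝ} {T : ℕ}
  (hγBdd : ∀ t, t < T → ∀ ω, 0 ≤ γ t ω ∧ γ t ω < C)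
  (hγC : ∀ t, T ≤ t → ∀ ω, γ t ω = C)

set_option linter.unusedSectionVars false

lemma Shat_succ_of_lt {n : ℕ} {ω : Ω} (h : γ (Shat γ C n ω) ω < C) :
    Shat γ C (n + 1) ω =
      Shat γ C n ω + sInf {θ : ℕ | 1 ≤ θ ∧ γ (Shat γ C n ω) ω <
        γ (Shat γ C n ω + θ) ω} := by
  show Shat γ C n ω + _ = _
  rw [if_pos h]

lemma Shat_succ_of_ge {n : ℕ} {ω : Ω} (h : ¬ γ (Shat γ C n ω) ω < C) :
    Shat γ C (n + 1) ω = Shat γ C n ω := by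
  show Shat γ C n ω + _ = _
  rw [if_neg h]; omega

lemma Shat_mono_succ (n : ℕ) (ω : Ω) : Shat γ C n ω ≤ Shat γ C (n + 1) ω := by
  show _ ≤ Shat γ C n ω + _
  omega

include hγC

lemma lt_T_of_lt_C {s : ℕ} {ω : Ω} (hs : s ≤ T) (h : γ s ω < C) : s < T := by
  rcases lt_or_eq_of_le hs with h' | rfl
  · exact h'
  · rw [hγC s le_rfl] at h; exact absurd h (lt_irrefl _)

/-- if `γ s ω < C` and `s < T` then `T - s` belongs to the hitting set. -/
lemma hit_nonempty {s : ℕ} {ω : Ω} (hs : s < T) (h : γ s ω < C) :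
    (T - s) ∈ {θ : ℕ | 1 ≤ θ ∧ γ s ω < γ (s + θ) ω} := by
  constructor
  · omega
  · have : s + (T - s) = T := by omega
    rw [this, hγC T le_rfl]; exact h

lemma Shat_le : ∀ n (ω : Ω), Shat γ C n ω ≤ T := by
  intro n
  induction n with
  | zero => intro ω; exact Nat.zero_le _
  | succ n ih =>
    intro ω
    show Shat γ C n ω + _ ≤ T
    by_cases hlt : γ (Shat γ C n ω) ω < C
    · rw [if_pos hlt]
      have hsT : Shat γ C n ω < T := lt_T_of_lt_C hγC (ih ω) hlt
      have := Nat.sInf_le (hit_nonempty hγC hsT hlt)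
      omega
    · rw [if_neg hlt]; simpa using ih ω

/-- On the increment branch: the inf is a member of the hitting set. -/
lemma sInf_mem_hit {n : ℕ} {ω : Ω} (h : γ (Shat γ C n ω) ω < C) :
    sInf {θ : ℕ | 1 ≤ θ ∧ γ (Shat γ C n ω) ω < γ (Shat γ C n ω + θ) ω} ∈
      {θ : ℕ | 1 ≤ θ ∧ γ (Shat γ C n ω) ω < γ (Shat γ C n ω + θ) ω} :=
  Nat.sInf_mem ⟨_, hit_nonempty hγC (lt_T_of_lt_C hγC (Shat_le hγC n ω) h) h⟩

include hγBdd in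
lemma Shat_eq_T {n : ℕ} (hn : T ≤ n) (ω : Ω) : Shat γ C n ω = T := by
  have key : ∀ m (ω : Ω), min m T ≤ Shat γ C m ω := by
    intro m
    induction m with
    | zero => intro ω; simp
    | succ m ih =>
      intro ω
      by_cases hlt : γ (Shat γ C m ω) ω < C
      · have h1 := Shat_succ_of_lt (γ := γ) (C := C) hlt
        have h2 := (sInf_mem_hit hγC hlt).1
        have := ih ω
        omega
      · have h1 := Shat_succ_of_ge (γ := γ) (C := C) hlt
        have h3 : ¬ Shat γ C m ω < T := fun hc =>
          hlt (hγBdd _ hc ω).2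
        have := Shat_le hγC m ω
        have := ih ω
        omega
  have h1 := key n ω
  have h2 := Shat_le hγC n ω
  omega

/-- Records dominate the past: `γ θ ≤ γ (Ŝ n)` for `θ ≤ Ŝ n`. -/
lemma gamma_le_Shat : ∀ (n : ℕ) (ω : Ω) (θ : ℕ), θ ≤ Shat γ C n ω →
    γ θ ω ≤ γ (Shat γ C n ω) ω := by
  intro n
  induction n with
  | zero =>
    intro ω θ hθ
    have h0 : Shat γ C 0 ω = 0 := rfl
    rw [h0] at hθ ⊢
    interval_cases θ
    exact le_rfl
  | succ n ih =>
    intro ω θ hθ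
    by_cases hlt : γ (Shat γ C n ω) ω < C
    · set s := Shat γ C n ω with hs
      have h1 := Shat_succ_of_lt (γ := γ) (C := C) hlt
      set σ := sInf {θ : ℕ | 1 ≤ θ ∧ γ s ω < γ (s + θ) ω} with hσ
      have hmem := sInf_mem_hit hγC hlt
      rw [← hs, ← hσ] at *
      have hgain : γ s ω < γ (s + σ) ω := hmem.2
      rw [h1]
      rcases le_or_gt θ s with hθs | hθs
      · exact le_trans (ih ω θ hθs) (le_of_lt hgain)
      · rcases eq_or_lt_of_le (show θ ≤ s + σ by omega) with heq | hlt2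
        · rw [heq]
        · have hd : θ - s < σ := by omega
          have hnotmem := Nat.notMem_of_lt_sInf (s := {θ : ℕ | 1 ≤ θ ∧ γ s ω < γ (s + θ) ω}) hd
          have : ¬ (1 ≤ θ - s ∧ γ s ω < γ (s + (θ - s)) ω) := hnotmem
          have hθeq : s + (θ - s) = θ := by omega
          rw [hθeq] at this
          push_neg at this
          exact le_trans (this (by omega)) (le_of_lt hgain)
    · rw [Shat_succ_of_ge (γ := γ) (C := C) hlt] at *
      exact ih ω θ hθ

/-- Between records, `γ θ ≤ γ (Ŝ n)`. -/
lemma gamma_le_between {n : ℕ} {ω : Ω} {θ : ℕ} (h1 : Shat γ C n ω ≤ θ)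
    (h2 : θ < Shat γ C (n + 1) ω) : γ θ ω ≤ γ (Shat γ C n ω) ω := by
  by_cases hlt : γ (Shat γ C n ω) ω < C
  · set s := Shat γ C n ω with hs
    have hsucc := Shat_succ_of_lt (γ := γ) (C := C) hlt
    rw [← hs] at hsucc
    rw [hsucc] at h2
    rcases eq_or_lt_of_le h1 with heq | hlt2
    · rw [← heq]
    · have hd : θ - s < sInf {θ : ℕ | 1 ≤ θ ∧ γ s ω < γ (s + θ) ω} := by omega
      have hnotmem : ¬ (1 ≤ θ - s ∧ γ s ω < γ (s + (θ - s)) ω) :=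
        Nat.notMem_of_lt_sInf hd
      have hθeq : s + (θ - s) = θ := by omega
      rw [hθeq] at hnotmem
      push_neg at hnotmem
      exact hnotmem (by omega)
  · rw [Shat_succ_of_ge (γ := γ) (C := C) hlt] at h2; omega

lemma prevailing_eq {n : ℕ} {ω : Ω} {t : ℕ} (h1 : Shat γ C n ω < t)
    (h2 : t ≤ Shat γ C (n + 1) ω) :
    prevailing γ t ω = γ (Shat γ C n ω) ω := by
  apply le_antisymm
  · apply Finset.sup'_le
    intro θ hθ
    simp only [Finset.mem_Icc] at hθ
    have hθt : θ < Shat γ C (n+1) ω := by omega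
    rcases le_or_gt θ (Shat γ C n ω) with hc | hc
    · exact gamma_le_Shat hγC n ω θ hc
    · exact gamma_le_between hγC (le_of_lt hc) hθt
  · exact Finset.le_sup' (fun θ => γ θ ω) (by simp only [Finset.mem_Icc]; omega)

end Struct

section Meas

variable {γ : ℕ → Ω → ℝ} {C : ℝ} {T : ℕ} {ℱ : ℕ → MeasurableSpace Ω}
  (hγC : ∀ t, T ≤ t → ∀ ω, γ t ω = C)

set_option linter.unusedSectionVars false

include hγC

lemma incr_eq_iff {s d : ℕ} {ω : Ω} (hsT : s ≤ T) :
    (if γ s ω < C then sInf {θ : ℕ | 1 ≤ θ ∧ γ s ω < γ (s + θ) ω} else 0) = d ↔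
      (if d = 0 then ¬ γ s ω < C
       else (γ s ω < C ∧ γ s ω < γ (s + d) ω ∧
         ∀ e, 1 ≤ e → e < d → γ (s + e) ω ≤ γ s ω)) := by
  by_cases hlt : γ s ω < C
  · rw [if_pos hlt]
    have hne : {θ : ℕ | 1 ≤ θ ∧ γ s ω < γ (s + θ) ω}.Nonempty :=
      ⟨_, hit_nonempty hγC (lt_T_of_lt_C hγC hsT hlt) hlt⟩
    have hmem := Nat.sInf_mem hne
    rcases Nat.eq_zero_or_pos d with rfl | hd
    · simp only [if_pos rfl]
      constructor
      · intro h0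
        rw [h0] at hmem
        exact absurd hmem.1 (by omega)
      · intro hc; exact absurd hlt hc
    · rw [if_neg (by omega)]
      constructor
      · intro heq
        rw [heq] at hmem
        refine ⟨hlt, hmem.2, fun e h1 h2 => ?_⟩
        have h2' : e < sInf {θ : ℕ | 1 ≤ θ ∧ γ s ω < γ (s + θ) ω} := by omega
        have hnm : ¬ (1 ≤ e ∧ γ s ω < γ (s + e) ω) :=
          Nat.notMem_of_lt_sInf h2'
        push_neg at hnm
        exact hnm h1
      · rintro ⟨-, hgt, hmin⟩
        apply le_antisymm
        · exact Nat.sInf_le ⟨hd, hgt⟩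
        · by_contra hc
          push_neg at hc
          have := hmin _ hmem.1 hc
          exact absurd hmem.2 (not_lt.mpr this)
  · rw [if_neg hlt]
    rcases Nat.eq_zero_or_pos d with rfl | hd
    · simp [hlt]
    · rw [if_neg (by omega)]
      constructor
      · intro h; omega
      · rintro ⟨hc, -⟩; exact absurd hc hlt

lemma Shat_step_iff (n d : ℕ) (ω : Ω) :
    Shat γ C (n + 1) ω = Shat γ C n ω + d ↔
      (if d = 0 then ¬ γ (Shat γ C n ω) ω < C
       else (γ (Shat γ C n ω) ω < C ∧
         γ (Shat γ C n ω) ω < γ (Shat γ C n ω + d) ω ∧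
         ∀ e, 1 ≤ e → e < d → γ (Shat γ C n ω + e) ω ≤ γ (Shat γ C n ω) ω)) := by
  have hrfl : Shat γ C (n + 1) ω = Shat γ C n ω +
      (if γ (Shat γ C n ω) ω < C then
        sInf {θ : ℕ | 1 ≤ θ ∧ γ (Shat γ C n ω) ω < γ (Shat γ C n ω + θ) ω}
      else 0) := rfl
  rw [hrfl, Nat.add_left_cancel_iff]
  exact incr_eq_iff hγC (Shat_le hγC n ω)

lemma Shat_meas (hℱmono : Monotone ℱ) (hγAdapted : ∀ t, Measurable[ℱ t] (γ t)) :
    ∀ n k, MeasurableSet[ℱ k] {ω | Shat γ C n ω = k} := by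
  intro n
  induction n with
  | zero =>
    intro k
    rcases Nat.eq_zero_or_pos k with rfl | hk
    · have : {ω : Ω | Shat γ C 0 ω = 0} = Set.univ := by
        ext ω; simp [show Shat γ C 0 ω = 0 from rfl]
      rw [this]; exact @MeasurableSet.univ Ω (ℱ 0)
    · have : {ω : Ω | Shat γ C 0 ω = k} = ∅ := by
        ext ω; simp [show Shat γ C 0 ω = 0 from rfl]; omega
      rw [this]; exact @MeasurableSet.empty Ω (ℱ k)
  | succ n ih =>
    intro k
    have hset : {ω : Ω | Shat γ C (n + 1) ω = k} =
        ⋃ s ∈ Finset.range (k + 1), ({ω : Ω | Shat γ C n ω = s} ∩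
          {ω : Ω | if k - s = 0 then ¬ γ s ω < C
            else (γ s ω < C ∧ γ s ω < γ (s + (k - s)) ω ∧
              ∀ e, 1 ≤ e → e < k - s → γ (s + e) ω ≤ γ s ω)}) := by
      ext ω
      simp only [Set.mem_setOf_eq, Set.mem_iUnion, Set.mem_inter_iff,
        Finset.mem_range, exists_prop]
      constructor
      · intro hk1
        have hle : Shat γ C n ω ≤ k := by
          have := Shat_mono_succ (γ := γ) (C := C) n ω; omega
        refine ⟨Shat γ C n ω, by omega, rfl, ?_⟩
        exact (Shat_step_iff hγC n (k - Shat γ C n ω) ω).mp (by omega)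
      · rintro ⟨s, hs, hSn, hpred⟩
        subst hSn
        have := (Shat_step_iff hγC n (k - Shat γ C n ω) ω).mpr hpred
        omega
    rw [hset]
    apply MeasurableSet.biUnion (Finset.range (k + 1)).countable_toSet
    intro s hs
    simp only [Finset.mem_coe, Finset.mem_range] at hs
    have hsk : s ≤ k := by omega
    have hmg : ∀ t, t ≤ k → Measurable[ℱ k] (γ t) :=
      fun t ht => (hγAdapted t).mono (hℱmono ht) le_rfl
    apply MeasurableSet.inter
    · exact hℱmono hsk _ (ih s)
    · rcases Nat.eq_zero_or_pos (k - s) with h0 | hpos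
      · have heq2 : {ω : Ω | if k - s = 0 then ¬ γ s ω < C
            else (γ s ω < C ∧ γ s ω < γ (s + (k - s)) ω ∧
              ∀ e, 1 ≤ e → e < k - s → γ (s + e) ω ≤ γ s ω)} =
            ((γ s) ⁻¹' (Set.Iio C))ᶜ := by
          ext ω; simp [h0, not_lt]
        rw [heq2]
        exact ((hmg s hsk) measurableSet_Iio).compl
      · have hne : ¬ (k - s = 0) := by omega
        simp only [if_neg hne]
        apply MeasurableSet.inter
        · exact (hmg s hsk) measurableSet_Iio
        apply MeasurableSet.inter
        · exact measurableSet_lt (hmg s hsk) (hmg (s + (k - s)) (by omega))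
        · show MeasurableSet[ℱ k] {ω : Ω | ∀ e, 1 ≤ e → e < k - s → γ (s + e) ω ≤ γ s ω}
          rw [show {ω : Ω | ∀ e, 1 ≤ e → e < k - s → γ (s + e) ω ≤ γ s ω} =
              ⋂ e, {ω : Ω | 1 ≤ e → e < k - s → γ (s + e) ω ≤ γ s ω} from
            Set.setOf_forall _]
          apply MeasurableSet.iInter
          intro e
          by_cases he : 1 ≤ e ∧ e < k - s
          · have : {ω : Ω | 1 ≤ e → e < k - s → γ (s + e) ω ≤ γ s ω} =
                {ω : Ω | γ (s + e) ω ≤ γ s ω} := by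
              ext ω; simp [he.1, he.2]
            rw [this]
            exact measurableSet_le (hmg (s + e) (by omega)) (hmg s hsk)
          · have : {ω : Ω | 1 ≤ e → e < k - s → γ (s + e) ω ≤ γ s ω} =
                Set.univ := by
              ext ω; simp only [Set.mem_setOf_eq, Set.mem_univ, iff_true]
              intro h1 h2; exact absurd ⟨h1, h2⟩ he
            rw [this]
            exact MeasurableSet.univ

end Meas

noncomputable def ind {Ω : Type*} (p : Ω → Prop) : Ω → ℝ := fun ω => if p ω then 1 else 0

lemma ind_pos {Ω : Type*} {p : Ω → Prop} {ω : Ω} (h : p ω) : ind p ω = 1 := if_pos h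

lemma ind_neg {Ω : Type*} {p : Ω → Prop} {ω : Ω} (h : ¬ p ω) : ind p ω = 0 := if_neg h

section Etools

variable {μ : Measure Ω} {ℱ : ℕ → MeasurableSpace Ω} {E : ℕ → (Ω → ℝ) → (Ω → ℝ)}

set_option linter.unusedSectionVars false

lemma aeeq_of_eq {f g : Ω → ℝ} (h : f = g) : f =ᵐ[μ] g := h ▸ Filter.EventuallyEq.rfl

lemma E_congr (hE : ConsistentCNE μ ℱ E) {t : ℕ} {X Y : Ω → ℝ} (h : X =ᵐ[μ] Y) :
    E t X =ᵐ[μ] E t Y :=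
  (hE.mono t Y X h.le).antisymm (hE.mono t X Y h.symm.le)

lemma meas_ind {m : MeasurableSpace Ω} {p : Ω → Prop} (hp : MeasurableSet[m] {ω | p ω}) :
    Measurable[m] (ind p) :=
  Measurable.ite hp measurable_const measurable_const

lemma ind_nonneg {p : Ω → Prop} : ∀ᵐ ω ∂μ, 0 ≤ ind p ω :=
  ae_of_all μ fun ω => by by_cases h : p ω <;> simp [ind, h]

lemma towerStop (hE : ConsistentCNE μ ℱ E) (hℱmono : Monotone ℱ)
    (τ : Ω → ℕ) (B : ℕ) (hτB : ∀ ω, τ ω ≤ B)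
    (hτ : ∀ k, MeasurableSet[ℱ k] {ω | τ ω = k}) (X : Ω → ℝ)
    (s : ℕ) (p : Ω → Prop) (hp : MeasurableSet[ℱ s] {ω | p ω})
    (hpτ : ∀ ω, p ω → s < τ ω) :
    (fun ω => ind p ω * E s X ω) =ᵐ[μ]
      (fun ω => ind p ω * E s (fun ω' => E (τ ω') X ω') ω) := by
  classical
  set H : ℕ → Ω → ℝ := fun m ω => if τ ω ≤ m then E (τ ω) X ω else X ω with hH
  set R : ℕ → Ω → ℝ := fun m ω => if τ ω ≤ m then E (τ ω) X ω else E m X ω with hR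
  have hτle : ∀ m, MeasurableSet[ℱ m] {ω | τ ω ≤ m} := by
    intro m
    have hrep : {ω : Ω | τ ω ≤ m} = ⋃ k ∈ Finset.range (m+1), {ω : Ω | τ ω = k} := by
      ext ω; simp [Nat.lt_succ_iff]
    rw [hrep]
    apply MeasurableSet.biUnion (Finset.range (m+1)).countable_toSet
    intro k hk
    simp only [Finset.mem_coe, Finset.mem_range, Nat.lt_succ_iff] at hk
    exact hℱmono hk _ (hτ k)
  have hτgt : ∀ m, MeasurableSet[ℱ m] {ω | m < τ ω} := by
    intro m
    have hrep : {ω : Ω | m < τ ω} = {ω : Ω | τ ω ≤ m}ᶜ := by ext ω; simp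
    rw [hrep]; exact (hτle m).compl
  have hc : ∀ m, Measurable[ℱ m] (fun ω => if τ ω ≤ m then E (τ ω) X ω else 0) := by
    intro m
    have hrep : (fun ω => if τ ω ≤ m then E (τ ω) X ω else 0) =
        fun ω => ∑ k ∈ Finset.range (m+1), ind (fun ω' => τ ω' = k) ω * E k X ω := by
      funext ω
      by_cases hm : τ ω ≤ m
      · rw [if_pos hm,
          Finset.sum_eq_single_of_mem (τ ω) (by simp [Nat.lt_succ_iff, hm])]
        · simp [ind]
        · intro b hb hbne
          simp [ind, Ne.symm hbne]
      · rw [if_neg hm]; symm; apply Finset.sum_eq_zero; intro k hk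
        simp only [Finset.mem_range, Nat.lt_succ_iff] at hk
        have hkk : τ ω ≠ k := by omega
        simp [ind, hkk]
    rw [hrep]
    apply Finset.measurable_sum
    intro k hk
    simp only [Finset.mem_range, Nat.lt_succ_iff] at hk
    exact (meas_ind (hℱmono hk _ (hτ k))).mul
      ((hE.adapted k X).mono (hℱmono hk) le_rfl)
  have key : ∀ m, E m (H m) =ᵐ[μ] R m := by
    intro m
    have hsplit : H m = fun ω => ind (fun ω' => m < τ ω') ω * X ω +
        (if τ ω ≤ m then E (τ ω) X ω else 0) := by
      funext ω; simp only [hH]; by_cases hm : τ ω ≤ m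
      · rw [if_pos hm, if_pos hm, ind_neg (by omega), zero_mul, zero_add]
      · rw [if_neg hm, if_neg hm, ind_pos (by omega), one_mul, add_zero]
    have hfin : (fun ω => ind (fun ω' => m < τ ω') ω * E m X ω +
        (if τ ω ≤ m then E (τ ω) X ω else 0)) = R m := by
      funext ω; simp only [hR]; by_cases hm : τ ω ≤ m
      · rw [if_pos hm, if_pos hm, ind_neg (by omega), zero_mul, zero_add]
      · rw [if_neg hm, if_neg hm, ind_pos (by omega), one_mul, add_zero]
    calc E m (H m)
        =ᵐ[μ] fun ω => E m (fun ω' => ind (fun ω'' => m < τ ω'') ω' * X ω') ω +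
          (if τ ω ≤ m then E (τ ω) X ω else 0) := by
          rw [hsplit]; exact hE.transl m _ _ (hc m)
      _ =ᵐ[μ] fun ω => ind (fun ω' => m < τ ω') ω * E m X ω +
          (if τ ω ≤ m then E (τ ω) X ω else 0) := by
          filter_upwards [hE.posHom m X _ (meas_ind (hτgt m)) ind_nonneg] with ω hω
          rw [hω]
      _ =ᵐ[μ] R m := aeeq_of_eq hfin
  have key2 : ∀ m, E m (H (m+1)) =ᵐ[μ] R m := by
    intro m
    have hsplit2 : R (m+1) = fun ω => ind (fun ω' => m < τ ω') ω * E (m+1) X ω +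
        (if τ ω ≤ m then E (τ ω) X ω else 0) := by
      funext ω; simp only [hR]; by_cases hm : τ ω ≤ m
      · rw [if_pos (show τ ω ≤ m + 1 by omega), if_pos hm, ind_neg (by omega),
          zero_mul, zero_add]
      · by_cases hm1 : τ ω ≤ m + 1
        · have hτω : τ ω = m + 1 := by omega
          rw [if_pos hm1]
          simp [ind, show m < τ ω by omega, hm, hτω]
        · rw [if_neg hm1, ind_pos (by omega), if_neg hm, one_mul, add_zero]
    have hfin : (fun ω => ind (fun ω' => m < τ ω') ω * E m X ω +
        (if τ ω ≤ m then E (τ ω) X ω else 0)) = R m := by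
      funext ω; simp only [hR]; by_cases hm : τ ω ≤ m
      · rw [if_pos hm, if_pos hm, ind_neg (by omega), zero_mul, zero_add]
      · rw [if_neg hm, if_neg hm, ind_pos (by omega), one_mul, add_zero]
    calc E m (H (m+1))
        =ᵐ[μ] E m (E (m+1) (H (m+1))) := hE.tower m (m+1) _ (by omega)
      _ =ᵐ[μ] E m (R (m+1)) := E_congr hE (key (m+1))
      _ =ᵐ[μ] fun ω => E m (fun ω' => ind (fun ω'' => m < τ ω'') ω' * E (m+1) X ω') ω +
          (if τ ω ≤ m then E (τ ω) X ω else 0) := by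
          rw [hsplit2]; exact hE.transl m _ _ (hc m)
      _ =ᵐ[μ] fun ω => ind (fun ω' => m < τ ω') ω * E m (E (m+1) X) ω +
          (if τ ω ≤ m then E (τ ω) X ω else 0) := by
          filter_upwards [hE.posHom m (E (m+1) X) _ (meas_ind (hτgt m)) ind_nonneg]
            with ω hω
          rw [hω]
      _ =ᵐ[μ] fun ω => ind (fun ω' => m < τ ω') ω * E m X ω +
          (if τ ω ≤ m then E (τ ω) X ω else 0) := by
          filter_upwards [hE.tower m (m+1) X (by omega)] with ω hω
          rw [← hω]
      _ =ᵐ[μ] R m := aeeq_of_eq hfin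
  have chain : ∀ m, s ≤ m → E s (H m) =ᵐ[μ] E s (H (m+1)) := fun m hm =>
    (hE.tower s m (H m) hm).trans
      ((E_congr hE ((key m).trans (key2 m).symm)).trans
        (hE.tower s m (H (m+1)) hm).symm)
  have main : ∀ k, E s (H s) =ᵐ[μ] E s (H (s+k)) := by
    intro k
    induction k with
    | zero => exact Filter.EventuallyEq.rfl
    | succ k ih => exact ih.trans (chain (s+k) (by omega))
  have hHB : H (s + B) = fun ω => E (τ ω) X ω := by
    funext ω; simp only [hH]; rw [if_pos (by have := hτB ω; omega)]
  have hstart : (fun ω => ind p ω * X ω) = (fun ω => ind p ω * H s ω) := by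
    funext ω; by_cases hpω : p ω
    · rw [ind_pos hpω, one_mul, one_mul]; simp only [hH]
      rw [if_neg (by have := hpτ ω hpω; omega)]
    · rw [ind_neg hpω, zero_mul, zero_mul]
  calc (fun ω => ind p ω * E s X ω)
      =ᵐ[μ] E s (fun ω => ind p ω * X ω) :=
        (hE.posHom s X _ (meas_ind hp) ind_nonneg).symm
    _ =ᵐ[μ] E s (fun ω => ind p ω * H s ω) := aeeq_of_eq (by rw [hstart])
    _ =ᵐ[μ] fun ω => ind p ω * E s (H s) ω :=
        hE.posHom s (H s) _ (meas_ind hp) ind_nonneg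
    _ =ᵐ[μ] fun ω => ind p ω * E s (H (s+B)) ω := by
        filter_upwards [main B] with ω hω; rw [hω]
    _ =ᵐ[μ] fun ω => ind p ω * E s (fun ω' => E (τ ω') X ω') ω := by
        rw [hHB]

end Etools

section Main

set_option linter.unusedSectionVars false
set_option maxHeartbeats 1000000

variable {μ : Measure Ω} {ℱ : ℕ → MeasurableSpace Ω} {E : ℕ → (Ω → ℝ) → (Ω → ℝ)}

noncomputable def Xtail (β : ℝ) (h γ : ℕ → Ω → ℝ) (C : ℝ) (T n : ℕ) : Ω → ℝ :=
  fun ω => ∑ t ∈ Finset.Icc (Shat γ C n ω + 1) T, β ^ t * (h t ω - prevailing γ t ω)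

noncomputable def Yblk (β : ℝ) (h γ : ℕ → Ω → ℝ) (C : ℝ) (n : ℕ) : Ω → ℝ :=
  fun ω => ∑ t ∈ Finset.Icc (Shat γ C n ω + 1) (Shat γ C (n + 1) ω),
    β ^ t * (h t ω - γ (Shat γ C n ω) ω)

lemma Xtail_decomp {β : ℝ} {h γ : ℕ → Ω → ℝ} {C : ℝ} {T : ℕ}
    (hγC : ∀ t, T ≤ t → ∀ ω, γ t ω = C) (n : ℕ) (ω : Ω) :
    Xtail β h γ C T n ω = Yblk β h γ C n ω + Xtail β h γ C T (n + 1) ω := by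
  unfold Xtail Yblk
  have h1 : Shat γ C n ω ≤ Shat γ C (n + 1) ω := Shat_mono_succ n ω
  have h2 : Shat γ C (n + 1) ω ≤ T := Shat_le hγC (n + 1) ω
  rw [Finset.Icc_add_one_left_eq_Ioc, Finset.Icc_add_one_left_eq_Ioc, Finset.Icc_add_one_left_eq_Ioc,
    ← Finset.sum_Ioc_consecutive _ h1 h2]
  congr 1
  apply Finset.sum_congr rfl
  intro t ht
  rw [Finset.mem_Ioc] at ht
  rw [prevailing_eq hγC ht.1 ht.2]

lemma fairgame (hℱmono : Monotone ℱ) (hE : ConsistentCNE μ ℱ E)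
    (T : ℕ) (C : ℝ) (β : ℝ) (h γ : ℕ → Ω → ℝ)
    (hhAdapted : ∀ t, Measurable[ℱ t] (h t))
    (hγAdapted : ∀ t, Measurable[ℱ t] (γ t))
    (hγBdd : ∀ t, t < T → ∀ ω, 0 ≤ γ t ω ∧ γ t ω < C)
    (hγC : ∀ t, T ≤ t → ∀ ω, γ t ω = C)
    (hknown : ∀ n : ℕ,
      (fun ω => E (Shat γ C n ω) (Yblk β h γ C n) ω) =ᵐ[μ] (fun _ => 0)) :
    ∀ n : ℕ, (fun ω => E (Shat γ C n ω) (Xtail β h γ C T n) ω) =ᵐ[μ] (fun _ => 0) := by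
  have hSmeas := Shat_meas hγC hℱmono hγAdapted
  have hSle := Shat_le (γ := γ) hγC
  -- backward induction
  have main : ∀ j n, T ≤ n + j →
      (fun ω => E (Shat γ C n ω) (Xtail β h γ C T n) ω) =ᵐ[μ] (fun _ => 0) := by
    intro j
    induction j with
    | zero =>
      intro n hn
      have hXn : Xtail β h γ C T n = fun _ => (0:ℝ) := by
        funext ω
        unfold Xtail
        rw [Shat_eq_T hγBdd hγC (by omega) ω, Finset.Icc_eq_empty (by omega),
          Finset.sum_empty]
      have hae : ∀ᵐ ω ∂μ, ∀ k : ℕ, E k (fun _ => (0:ℝ)) ω = 0 :=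
        ae_all_iff.mpr fun k => hE.normalized k
      filter_upwards [hae] with ω hω
      show E (Shat γ C n ω) (Xtail β h γ C T n) ω = 0
      rw [hXn]
      exact hω (Shat γ C n ω)
    | succ j ihj =>
      intro n hn
      by_cases hnj : T ≤ n + j
      · exact ihj n hnj
      have IH : (fun ω => E (Shat γ C (n + 1) ω) (Xtail β h γ C T (n + 1)) ω)
          =ᵐ[μ] (fun _ => 0) := ihj (n + 1) (by omega)
      -- Step B: for every s', on {Ŝ_{n+1} = s'} we have E_{s'}(X_n) = Y_n a.e.
      have stepB : ∀ s' : ℕ,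
          (fun ω => ind (fun ω'' => Shat γ C (n + 1) ω'' = s') ω *
            E s' (Xtail β h γ C T n) ω) =ᵐ[μ]
          (fun ω => ind (fun ω'' => Shat γ C (n + 1) ω'' = s') ω *
            Yblk β h γ C n ω) := by
        intro s'
        set A : Ω → Prop := fun ω'' => Shat γ C (n + 1) ω'' = s' with hA
        have hAmeas : MeasurableSet[ℱ s'] {ω | A ω} := hSmeas (n + 1) s'
        -- measurability of the stopped reward
        have hcmeas : Measurable[ℱ s'] (fun ω => ind A ω * Yblk β h γ C n ω) := by
          have hrep : (fun ω => ind A ω * Yblk β h γ C n ω) =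
              fun ω => ∑ s ∈ Finset.range (s' + 1),
                ind (fun ω'' => Shat γ C n ω'' = s ∧ Shat γ C (n + 1) ω'' = s') ω *
                  (∑ t ∈ Finset.Icc (s + 1) s', β ^ t * (h t ω - γ s ω)) := by
            funext ω
            by_cases hAω : A ω
            · have hle : Shat γ C n ω ≤ s' := by
                have := Shat_mono_succ (γ := γ) (C := C) n ω
                have := hAω
                simp only [hA] at this
                omega
              rw [Finset.sum_eq_single_of_mem (Shat γ C n ω)
                (by simp [Nat.lt_succ_iff, hle])]
              · have hAω' : Shat γ C (n + 1) ω = s' := hAω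
                simp [ind, hA, hAω', Yblk]
              · intro b hb hbne
                simp [ind, Ne.symm hbne]
            · have hAω' : ¬ Shat γ C (n + 1) ω = s' := hAω
              simp [ind, hA, hAω']
          rw [hrep]
          apply Finset.measurable_sum
          intro s hs
          simp only [Finset.mem_range, Nat.lt_succ_iff] at hs
          apply Measurable.mul
          · apply meas_ind
            rw [Set.setOf_and]
            exact (hℱmono hs _ (hSmeas n s)).inter (hSmeas (n + 1) s')
          · apply Finset.measurable_sum
            intro t ht
            simp only [Finset.mem_Icc] at ht
            exact Measurable.const_mul
              (((hhAdapted t).mono (hℱmono ht.2) le_rfl).sub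
                ((hγAdapted s).mono (hℱmono hs) le_rfl)) (β ^ t)
        -- the five on the inner conditional expectation of the future
        have five : (fun ω => ind A ω * E s' (Xtail β h γ C T (n + 1)) ω)
            =ᵐ[μ] (fun _ => (0:ℝ)) := by
          filter_upwards [IH] with ω h0
          by_cases hAω : A ω
          · have hAω' : Shat γ C (n + 1) ω = s' := hAω
            rw [ind_pos hAω, one_mul, ← hAω']
            exact h0
          · rw [ind_neg hAω, zero_mul]
        have harg : (fun ω => ind A ω * Xtail β h γ C T n ω) =
            (fun ω => ind A ω * Xtail β h γ C T (n + 1) ω +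
              ind A ω * Yblk β h γ C n ω) := by
          funext ω
          rw [Xtail_decomp hγC n ω]
          ring
        calc (fun ω => ind A ω * E s' (Xtail β h γ C T n) ω)
            =ᵐ[μ] E s' (fun ω => ind A ω * Xtail β h γ C T n ω) :=
              (hE.posHom s' _ (ind A) (meas_ind hAmeas) ind_nonneg).symm
          _ =ᵐ[μ] fun ω => E s' (fun ω' => ind A ω' * Xtail β h γ C T (n + 1) ω') ω +
              ind A ω * Yblk β h γ C n ω := by
              rw [harg]
              exact hE.transl s' _ _ hcmeas
          _ =ᵐ[μ] fun ω => ind A ω * E s' (Xtail β h γ C T (n + 1)) ω +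
              ind A ω * Yblk β h γ C n ω := by
              filter_upwards [hE.posHom s' (Xtail β h γ C T (n + 1)) (ind A)
                (meas_ind hAmeas) ind_nonneg] with ω hω
              rw [hω]
          _ =ᵐ[μ] fun ω => ind A ω * Yblk β h γ C n ω := by
              filter_upwards [five] with ω h5
              show ind A ω * E s' (Xtail β h γ C T (n + 1)) ω +
                ind A ω * Yblk β h γ C n ω = ind A ω * Yblk β h γ C n ω
              rw [h5, zero_add]
      -- Step C: E at the stopping time Ŝ_{n+1} of X_n is Y_n a.e.
      have stepC : (fun ω => E (Shat γ C (n + 1) ω) (Xtail β h γ C T n) ω)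
          =ᵐ[μ] Yblk β h γ C n := by
        have hall : ∀ᵐ ω ∂μ, ∀ s' : ℕ,
            ind (fun ω'' => Shat γ C (n + 1) ω'' = s') ω *
              E s' (Xtail β h γ C T n) ω =
            ind (fun ω'' => Shat γ C (n + 1) ω'' = s') ω * Yblk β h γ C n ω :=
          ae_all_iff.mpr stepB
        filter_upwards [hall] with ω hω
        have := hω (Shat γ C (n + 1) ω)
        simp only [ind, eq_self_iff_true, if_true, one_mul] at this
        exact this
      -- Step D: conclude
      have claim : ∀ s : ℕ,
          (fun ω => ind (fun ω'' => Shat γ C n ω'' = s) ω *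
            E s (Xtail β h γ C T n) ω) =ᵐ[μ] (fun _ => (0:ℝ)) := by
        intro s
        set B : Ω → Prop := fun ω'' => Shat γ C n ω'' = s with hB
        have hBmeas : MeasurableSet[ℱ s] {ω | B ω} := hSmeas n s
        by_cases hsT : s < T
        · have hpτ : ∀ ω, B ω → s < Shat γ C (n + 1) ω := by
            intro ω hBω
            have hBω' : Shat γ C n ω = s := hBω
            have hγs : γ (Shat γ C n ω) ω < C := by
              rw [hBω']; exact (hγBdd s hsT ω).2
            have hsucc := Shat_succ_of_lt (γ := γ) (C := C) hγs
            have hmem := sInf_mem_hit hγC hγs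
            have := hmem.1
            omega
          have tower := towerStop hE hℱmono (Shat γ C (n + 1)) T (hSle (n + 1))
            (hSmeas (n + 1)) (Xtail β h γ C T n) s B hBmeas hpτ
          have tw2 : (fun ω => ind B ω *
              E s (fun ω' => E (Shat γ C (n + 1) ω') (Xtail β h γ C T n) ω') ω)
              =ᵐ[μ] (fun ω => ind B ω * E s (Yblk β h γ C n) ω) := by
            filter_upwards [E_congr hE stepC (t := s)] with ω hω
            rw [hω]
          have tw3 : (fun ω => ind B ω * E s (Yblk β h γ C n) ω)
              =ᵐ[μ] (fun _ => (0:ℝ)) := by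
            filter_upwards [hknown n] with ω h0
            by_cases hBω : B ω
            · have hBω' : Shat γ C n ω = s := hBω
              rw [ind_pos hBω, one_mul, ← hBω']
              exact h0
            · rw [ind_neg hBω, zero_mul]
          exact (tower.trans tw2).trans tw3
        · -- here on {Ŝ_n = s}, necessarily s = T and the sum is empty
          have hzero : (fun ω => ind B ω * Xtail β h γ C T n ω) =
              (fun _ => (0:ℝ)) := by
            funext ω
            by_cases hBω : B ω
            · have hBω' : Shat γ C n ω = s := hBω
              have hST : Shat γ C n ω = T := by
                have := hSle n ω; omega
              rw [ind_pos hBω, one_mul]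
              unfold Xtail
              rw [hST, Finset.Icc_eq_empty (by omega), Finset.sum_empty]
            · rw [ind_neg hBω, zero_mul]
          calc (fun ω => ind B ω * E s (Xtail β h γ C T n) ω)
              =ᵐ[μ] E s (fun ω => ind B ω * Xtail β h γ C T n ω) :=
                (hE.posHom s _ (ind B) (meas_ind hBmeas) ind_nonneg).symm
            _ =ᵐ[μ] (fun _ => (0:ℝ)) := by
                rw [hzero]
                exact hE.normalized s
      have hall : ∀ᵐ ω ∂μ, ∀ s : ℕ,
          ind (fun ω'' => Shat γ C n ω'' = s) ω * E s (Xtail β h γ C T n) ω = 0 :=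
        ae_all_iff.mpr claim
      filter_upwards [hall] with ω hω
      have := hω (Shat γ C n ω)
      simp only [ind, eq_self_iff_true, if_true, one_mul] at this
      exact this
  exact fun n => main T n (by omega)

end Main

/-- **Proposition 4.1 (fair game).**  With the prevailing reward
`Γ(t) = max_{0≤θ≤t-1} γ(θ)` and the hitting-time sequence `Ŝ_n`, for all `n`,
`𝓔(∑_{t=Ŝ_n+1}^{T} β^t (h(t) - Γ(t)) | ℱ_{Ŝ_n}) = 0` a.s.; in particular
`𝓔(∑_{t=1}^{T} β^t (h(t) - Γ(t))) = 0` a.s. -/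
theorem stmt8 (μ : Measure Ω) [IsProbabilityMeasure μ]
    (ℱ : ℕ → MeasurableSpace Ω) (hℱmono : Monotone ℱ)
    (hℱle : ∀ t, ℱ t ≤ ‹MeasurableSpace Ω›)
    (E : ℕ → (Ω → ℝ) → (Ω → ℝ)) (hE : ConsistentCNE μ ℱ E)
    (T : ℕ) (C : ℝ) (hC : 0 < C) (β : ℝ) (hβ : β ∈ Set.Ioo (0 : ℝ) 1)
    (h : ℕ → Ω → ℝ) (hhAdapted : ∀ t, Measurable[ℱ t] (h t))
    (hhBdd : ∀ t, t ≤ T → ∀ ω, 0 ≤ h t ω ∧ h t ω < C)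
    (hhC : ∀ t, T < t → ∀ ω, h t ω = C)
    -- the robust Gittins index process
    (γ : ℕ → Ω → ℝ) (hγAdapted : ∀ t, Measurable[ℱ t] (γ t))
    (hγBdd : ∀ t, t < T → ∀ ω, 0 ≤ γ t ω ∧ γ t ω < C)
    (hγC : ∀ t, T ≤ t → ∀ ω, γ t ω = C)
    -- known (Theorem 4.2, optimality of the hitting times): for each `n`,
    -- `𝓔(∑_{t=Ŝ_n+1}^{Ŝ_{n+1}} β^t (h(t) - γ(Ŝ_n)) | ℱ_{Ŝ_n}) = 0` a.s.
    (hknown : ∀ n : ℕ,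
      (fun ω => E (Shat γ C n ω)
        (fun ω' => ∑ t ∈ Finset.Icc (Shat γ C n ω' + 1) (Shat γ C (n + 1) ω'),
          β ^ t * (h t ω' - γ (Shat γ C n ω') ω')) ω) =ᵐ[μ] 0) :
    (∀ n : ℕ,
      (fun ω => E (Shat γ C n ω)
        (fun ω' => ∑ t ∈ Finset.Icc (Shat γ C n ω' + 1) T,
          β ^ t * (h t ω' - prevailing γ t ω')) ω) =ᵐ[μ] 0) ∧
    E 0 (fun ω => ∑ t ∈ Finset.Icc 1 T,
        β ^ t * (h t ω - prevailing γ t ω)) =ᵐ[μ] 0 := by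
  have part1 := fairgame hℱmono hE T C β h γ hhAdapted hγAdapted hγBdd hγC
    (fun n => hknown n)
  exact ⟨fun n => part1 n, part1 0⟩
end

section
/- With the prevailing reward $\Gamma(t) = \max_{0\le\theta\le t-1}\gamma(\theta)$, for every deterministic time $N$ with $0 \le N \le T-1$, $\mathcal{E}(\sum_{t=N+1}^{T} \beta^t (h(t) - \Gamma(t)) \mid \mathcal{F}_N) \le 0$ almost surely. -/
open MeasureTheory Filter Classical Finset

variable {Ω : Type*} [MeasurableSpace Ω]

/-!
Let `λ = Γ(N+1) = max_{θ ≤ N} γ(θ)`, let `σ ≥ 1` be the first time after `N` at which `γ`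
exceeds `λ`, and let `s ≤ N` be the first time at which `γ` attains `λ`. On `(N, N+σ]` the
prevailing reward is `λ`, so the sum splits into a part up to `N+σ` with reward `λ` and a part
after `N+σ`. If `s = N`, then `N` is a strict record of `γ`, hence one of the times `Ŝ_m`, and the
fair-game property kills the whole sum. If `s < N`, the hitting time of the level `γ(s)` from `s`
is `N - s + σ`, so the first part is `β^s` times the residual of Lemma A.8 for the level `γ(s)`
after the stopping time `N - s`; and `N + σ` is again a strict record, where the fair-game
property applies to the second part. The events involved are measurable at the relevant
times, so localisation, the tower property and subadditivity of `𝓔` assemble the pieces.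
-/

theorem Finset.sum_Icc_add_left {M : Type*} [AddCommMonoid M] (f : ℕ → M) (a b c : ℕ) :
    ∑ t ∈ Finset.Icc (c + a) (c + b), f t = ∑ u ∈ Finset.Icc a b, f (c + u) := by
  rw [← Finset.map_add_left_Icc, Finset.sum_map]
  rfl

theorem sum_Icc_pow_mul_eq_pow_mul_sum {s N : ℕ} (hsN : s ≤ N) (k : ℕ) (β : ℝ) (g : ℕ → ℝ) :
    ∑ t ∈ Finset.Icc (N + 1) (N + k), β ^ t * g t =
      β ^ s * ∑ t ∈ Finset.Icc (N - s + 1) (N - s + k), β ^ t * g (s + t) := by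
  rw [Finset.sum_Icc_add_left, Finset.sum_Icc_add_left, Finset.mul_sum]
  refine Finset.sum_congr rfl fun u _ => ?_
  rw [← mul_assoc, ← pow_add, show s + (N - s + u) = N + u by omega]

theorem Nat.sInf_setOf_eq_iff {p : ℕ → Prop} {n : ℕ} (h : ∃ k, p k) :
    sInf {k | p k} = n ↔ p n ∧ ∀ k < n, ¬p k := by
  rw [Nat.sInf_def (s := {k | p k}) h]
  exact Nat.find_eq_iff h

theorem Nat.sInf_setOf_eq_iff_of_ne_zero {p : ℕ → Prop} {n : ℕ} (hn : n ≠ 0) :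
    sInf {k | p k} = n ↔ p n ∧ ∀ k < n, ¬p k := by
  by_cases h : ∃ k, p k
  · exact Nat.sInf_setOf_eq_iff h
  · simp only [not_exists] at h
    simp [h, hn.symm]

theorem MeasurableSet.setOf_first {α : Type*} {m : MeasurableSpace α} {p : ℕ → α → Prop} {n : ℕ}
    (hp : ∀ k ≤ n, MeasurableSet[m] {ω | p k ω}) :
    MeasurableSet[m] {ω | p n ω ∧ ∀ k < n, ¬p k ω} := by
  have hset : {ω | p n ω ∧ ∀ k < n, ¬p k ω} =
      {ω | p n ω} ∩ ⋂ k ∈ Finset.range n, {ω | p k ω}ᶜ := by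
    ext ω
    simp
  rw [hset]
  exact (hp n le_rfl).inter <| Finset.measurableSet_biInter _ fun k hk =>
    (hp k (Finset.mem_range.1 hk).le).compl

namespace ConsistentCNE

variable {μ : Measure Ω} {ℱ : ℕ → MeasurableSpace Ω} {E : ℕ → (Ω → ℝ) → (Ω → ℝ)}

theorem le_zero (hE : ConsistentCNE μ ℱ E) {t : ℕ} {X : Ω → ℝ} (hX : X ≤ᵐ[μ] 0) :
    E t X ≤ᵐ[μ] 0 :=
  (hE.mono t _ X hX).trans (hE.normalized t).le

theorem add_le_zero (hE : ConsistentCNE μ ℱ E) {t : ℕ} {X Y : Ω → ℝ}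
    (hX : E t X ≤ᵐ[μ] 0) (hY : E t Y ≤ᵐ[μ] 0) : E t (fun ω => X ω + Y ω) ≤ᵐ[μ] 0 := by
  filter_upwards [hE.subadd t X Y, hX, hY] with ω h hXω hYω
  simp only [Pi.zero_apply] at *
  linarith

theorem sum_le_zero (hE : ConsistentCNE μ ℱ E) {t : ℕ} {ι : Type*} {I : Finset ι}
    {X : ι → Ω → ℝ} (hX : ∀ i ∈ I, E t (X i) ≤ᵐ[μ] 0) :
    E t (fun ω => ∑ i ∈ I, X i ω) ≤ᵐ[μ] 0 := by
  induction I using Finset.induction with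
  | empty =>
    simp only [Finset.sum_empty]
    exact (hE.normalized t).le
  | insert i I hi ih =>
    simp only [Finset.sum_insert hi]
    exact hE.add_le_zero (hX i (Finset.mem_insert_self i I))
      (ih fun j hj => hX j (Finset.mem_insert_of_mem hj))

theorem indicator_le_zero (hE : ConsistentCNE μ ℱ E) {t t' : ℕ} (htt' : t ≤ t') {A : Set Ω}
    (hA : MeasurableSet[ℱ t'] A) {X : Ω → ℝ} (hX : ∀ᵐ ω ∂μ, ω ∈ A → E t' X ω ≤ 0) :
    E t (A.indicator X) ≤ᵐ[μ] 0 := by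
  have hmul : A.indicator X = fun ω => A.indicator 1 ω * X ω := by
    funext ω
    by_cases hω : ω ∈ A <;> simp [hω]
  have hloc : E t' (A.indicator X) ≤ᵐ[μ] 0 := by
    rw [hmul]
    filter_upwards [hE.posHom t' X (A.indicator 1) ((measurable_const.indicator hA))
      (Eventually.of_forall fun ω => Set.indicator_nonneg (fun _ _ => zero_le_one) ω), hX]
      with ω hpos hXω
    rw [hpos]
    by_cases hω : ω ∈ A <;> simp [hω, hXω]
  exact (hE.tower t t' _ htt').le.trans (hE.le_zero hloc)

theorem indicator_le_zero_of_index (hE : ConsistentCNE μ ℱ E) {t : ℕ} {A : Set Ω}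
    {Y : Ω → ℝ} {ι : Type*} (I : Finset ι) (κ : Ω → ι) (τ : ι → ℕ) (X : ι → Ω → ℝ)
    (hκ : ∀ ω ∈ A, κ ω ∈ I) (hY : ∀ ω ∈ A, Y ω = X (κ ω) ω) (hτ : ∀ i ∈ I, t ≤ τ i)
    (hmeas : ∀ i ∈ I, MeasurableSet[ℱ (τ i)] (A ∩ κ ⁻¹' {i}))
    (hX : ∀ i ∈ I, ∀ᵐ ω ∂μ, ω ∈ A → κ ω = i → E (τ i) (X i) ω ≤ 0) :
    E t (A.indicator Y) ≤ᵐ[μ] 0 := by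
  have hsplit : A.indicator Y = fun ω => ∑ i ∈ I, (A ∩ κ ⁻¹' {i}).indicator (X i) ω := by
    funext ω
    by_cases hω : ω ∈ A
    · rw [Finset.sum_eq_single_of_mem (κ ω) (hκ ω hω) fun i _ hi => by simp [Ne.symm hi]]
      simp [hω, hY ω hω]
    · simp [hω]
  rw [hsplit]
  refine hE.sum_le_zero fun i hi => hE.indicator_le_zero (hτ i hi) (hmeas i hi) ?_
  filter_upwards [hX i hi] with ω hω hmem
  exact hω hmem.1 hmem.2

end ConsistentCNE

section Paths

variable {α : Type*} {γ : ℕ → α → ℝ} {C : ℝ} {T : ℕ}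

theorem hitTime_eq_iff {s n : ℕ} {lam : α → ℝ} {ω : α} (hn : n ≠ 0) :
    hitTime γ s lam ω = n ↔
      lam ω < γ (s + n) ω ∧ ∀ k < n, 1 ≤ k → γ (s + k) ω ≤ lam ω := by
  rw [hitTime, Nat.sInf_setOf_eq_iff_of_ne_zero hn]
  simp only [not_and, not_lt]
  exact and_congr (and_iff_right (Nat.one_le_iff_ne_zero.2 hn)) Iff.rfl

theorem le_of_lt_hitTime {s θ : ℕ} {lam : α → ℝ} {ω : α} (hθ : 1 ≤ θ)
    (hθs : θ < hitTime γ s lam ω) : γ (s + θ) ω ≤ lam ω :=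
  not_lt.1 fun hlt => Nat.notMem_of_lt_sInf hθs ⟨hθ, hlt⟩

theorem hitTime_eq_zero (hγle : ∀ t ω, γ t ω ≤ C) {s : ℕ} {lam : α → ℝ} {ω : α}
    (hlam : C ≤ lam ω) : hitTime γ s lam ω = 0 := by
  have hempty : {θ : ℕ | 1 ≤ θ ∧ lam ω < γ (s + θ) ω} = ∅ :=
    Set.eq_empty_of_forall_notMem fun θ hθ => (hγle _ ω).not_gt (hlam.trans_lt hθ.2)
  simp only [hitTime, hempty, Nat.sInf_empty]

theorem hitTime_mem (hγC : ∀ t, T ≤ t → ∀ ω, γ t ω = C) {s : ℕ} {lam : α → ℝ} {ω : α}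
    (hlam : lam ω < C) : 1 ≤ hitTime γ s lam ω ∧ lam ω < γ (s + hitTime γ s lam ω) ω :=
  Nat.sInf_mem (s := {θ | 1 ≤ θ ∧ lam ω < γ (s + θ) ω})
    ⟨T + 1, by omega, by rwa [hγC _ (by omega)]⟩

theorem hitTime_le (hγC : ∀ t, T ≤ t → ∀ ω, γ t ω = C) {s : ℕ} (hs : s < T) {lam : α → ℝ}
    {ω : α} (hlam : lam ω < C) : hitTime γ s lam ω ≤ T - s :=
  Nat.sInf_le ⟨by omega, by rwa [Nat.add_sub_cancel' hs.le, hγC T le_rfl]⟩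

theorem hitTime_eq_add (hγC : ∀ t, T ≤ t → ∀ ω, γ t ω = C) {s k : ℕ} {lam : α → ℝ} {ω : α}
    (hlam : lam ω < C) (hle : ∀ θ, 1 ≤ θ → θ ≤ k → γ (s + θ) ω ≤ lam ω) :
    hitTime γ s lam ω = k + hitTime γ (s + k) lam ω := by
  obtain ⟨hpos, hhit⟩ := hitTime_mem hγC (s := s + k) hlam
  rw [hitTime_eq_iff (by omega), ← add_assoc]
  refine ⟨hhit, fun θ hθ hθ1 => ?_⟩
  rcases le_or_gt θ k with hθk | hkθ
  · exact hle θ hθ1 hθk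
  · simpa [add_assoc, Nat.add_sub_cancel' hkθ.le] using
      le_of_lt_hitTime (s := s + k) (θ := θ - k) (by omega) (by omega)

theorem measurableSet_hitTime_eq {ℱ : ℕ → MeasurableSpace α} (hℱ : Monotone ℱ)
    (hγ : ∀ t, Measurable[ℱ t] (γ t)) (hγle : ∀ t ω, γ t ω ≤ C)
    (hγC : ∀ t, T ≤ t → ∀ ω, γ t ω = C) {s : ℕ} {lam : α → ℝ}
    (hlam : Measurable[ℱ s] lam) (n : ℕ) :
    MeasurableSet[ℱ (s + n)] {ω | hitTime γ s lam ω = n} := by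
  have hlam' : Measurable[ℱ (s + n)] lam := hlam.mono (hℱ (Nat.le_add_right s n)) le_rfl
  rcases Nat.eq_zero_or_pos n with rfl | hn
  · have hset : {ω | hitTime γ s lam ω = 0} = {ω | C ≤ lam ω} := by
      ext ω
      simp only [Set.mem_ofPred_eq]
      refine ⟨fun h0 => not_lt.1 fun hlt => ?_, hitTime_eq_zero hγle⟩
      have := (hitTime_mem hγC (s := s) hlt).1
      omega
    rw [hset]
    exact measurableSet_le measurable_const hlam'
  · have hset : {ω | hitTime γ s lam ω = n} =
        {ω | lam ω < γ (s + n) ω} ∩ ⋂ k ∈ Finset.range n, {ω | 1 ≤ k → γ (s + k) ω ≤ lam ω} := by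
      ext ω
      simp [hitTime_eq_iff hn.ne']
    rw [hset]
    refine (measurableSet_lt hlam' (hγ _)).inter <| Finset.measurableSet_biInter _ fun k hk => ?_
    by_cases hk1 : 1 ≤ k
    · simpa [hk1] using measurableSet_le
        ((hγ (s + k)).mono (hℱ (by simp at hk; omega)) le_rfl) hlam'
    · simp [hk1]

theorem min_mem_stopTimes {ℱ : ℕ → MeasurableSpace α} (hℱ : Monotone ℱ) {s c : ℕ}
    (hc : 1 ≤ c) {H : α → ℕ} (hH1 : ∀ ω, 1 ≤ H ω)
    (hH : ∀ n, MeasurableSet[ℱ (s + n)] {ω | H ω = n}) :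
    (fun ω => min c (H ω)) ∈ stopTimes ℱ s := by
  refine ⟨fun ω => le_min hc (hH1 ω), ⟨c, fun ω => min_le_left _ _⟩, fun n => ?_⟩
  rcases lt_trichotomy n c with hn | rfl | hn
  · have hset : {ω | min c (H ω) = n} = {ω | H ω = n} := by
      ext ω
      simp only [Set.mem_ofPred_eq]
      omega
    rw [hset]
    exact hH n
  · have hset : {ω | min n (H ω) = n} = ⋂ k ∈ Finset.range n, {ω | H ω = k}ᶜ := by
      ext ω
      simp only [Set.mem_ofPred_eq, min_eq_left_iff, Set.mem_iInter, Finset.mem_range,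
        Set.mem_compl_iff]
      constructor
      · intro h k hk hHk
        omega
      · intro h
        by_contra! hlt
        exact h (H ω) hlt rfl
    rw [hset]
    exact Finset.measurableSet_biInter _ fun k hk =>
      (hℱ (by simp only [Finset.mem_range] at hk; omega) _ (hH k)).compl
  · have hset : {ω | min c (H ω) = n} = ∅ := by
      ext ω
      simp only [Set.mem_ofPred_eq, Set.mem_empty_iff_false, iff_false]
      omega
    rw [hset]
    exact @MeasurableSet.empty α (ℱ (s + n))

theorem Shat_succ (hγle : ∀ t ω, γ t ω ≤ C) (n : ℕ) (ω : α) :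
    Shat γ C (n + 1) ω = Shat γ C n ω + hitTime γ (Shat γ C n ω) (γ (Shat γ C n ω)) ω := by
  rw [Shat]
  split_ifs with h
  · rfl
  · rw [hitTime_eq_zero hγle (not_lt.1 h)]

theorem measurableSet_Shat_eq {ℱ : ℕ → MeasurableSpace α} (hℱ : Monotone ℱ)
    (hγ : ∀ t, Measurable[ℱ t] (γ t)) (hγle : ∀ t ω, γ t ω ≤ C)
    (hγC : ∀ t, T ≤ t → ∀ ω, γ t ω = C) (n r : ℕ) :
    MeasurableSet[ℱ r] {ω | Shat γ C n ω = r} := by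
  induction n generalizing r with
  | zero => exact MeasurableSet.const (0 = r)
  | succ n ih =>
    have hset : {ω | Shat γ C (n + 1) ω = r} = ⋃ p ∈ Finset.range (r + 1),
        {ω | Shat γ C n ω = p} ∩ {ω | hitTime γ p (γ p) ω = r - p} := by
      ext ω
      simp only [Set.mem_ofPred_eq, Shat_succ hγle, Set.mem_iUnion, Set.mem_inter_iff,
        Finset.mem_range, exists_prop]
      constructor
      · intro h
        exact ⟨Shat γ C n ω, by omega, rfl, by omega⟩
      · rintro ⟨p, hp, rfl, h⟩
        omega
    rw [hset]
    refine Finset.measurableSet_biUnion _ fun p hp => ?_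
    have hpr : p ≤ r := Nat.lt_succ_iff.1 (Finset.mem_range.1 hp)
    have hhit := measurableSet_hitTime_eq hℱ hγ hγle hγC (hγ p) (r - p)
    rw [Nat.add_sub_cancel' hpr] at hhit
    exact (hℱ hpr _ (ih p)).inter hhit

def IsRecord (x : ℕ → ℝ) (r : ℕ) : Prop := ∀ θ < r, x θ < x r

theorem exists_isRecord_forall_le (x : ℕ → ℝ) (n : ℕ) :
    ∃ r ≤ n, IsRecord x r ∧ ∀ θ ≤ n, x θ ≤ x r := by
  induction n with
  | zero => exact ⟨0, le_rfl, fun θ hθ => absurd hθ θ.not_lt_zero, fun θ hθ => by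
    rw [Nat.le_zero.1 hθ]⟩
  | succ n ih =>
    obtain ⟨r, hrn, hrec, hmax⟩ := ih
    by_cases hlt : x r < x (n + 1)
    · refine ⟨n + 1, le_rfl, fun θ hθ => (hmax θ (by omega)).trans_lt hlt, fun θ hθ => ?_⟩
      rcases Nat.lt_or_eq_of_le hθ with hθ | rfl
      · exact (hmax θ (by omega)).trans hlt.le
      · exact le_rfl
    · refine ⟨r, by omega, hrec, fun θ hθ => ?_⟩
      rcases Nat.lt_or_eq_of_le hθ with hθ | rfl
      · exact hmax θ (by omega)
      · exact not_lt.1 hlt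

theorem IsRecord.le (hγC : ∀ t, T ≤ t → ∀ ω, γ t ω = C) {ω : α} {r : ℕ}
    (hr : IsRecord (γ · ω) r) : r ≤ T := by
  by_contra! hTr
  have := hr T hTr
  simp only [hγC T le_rfl, hγC r hTr.le, lt_self_iff_false] at this

theorem exists_Shat_eq_of_isRecord (hγle : ∀ t ω, γ t ω ≤ C) {ω : α} {r : ℕ}
    (hr : IsRecord (γ · ω) r) : ∃ m ≤ r, Shat γ C m ω = r := by
  induction r using Nat.strong_induction_on with
  | _ r ih =>
  rcases Nat.eq_zero_or_pos r with rfl | hr0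
  · exact ⟨0, le_rfl, rfl⟩
  obtain ⟨r', hr', hrec', hmax⟩ := exists_isRecord_forall_le (γ · ω) (r - 1)
  obtain ⟨m, hm, hSm⟩ := ih r' (by omega) hrec'
  have hhit : hitTime γ r' (γ r') ω = r - r' := by
    rw [hitTime_eq_iff (by omega), Nat.add_sub_cancel' (by omega)]
    exact ⟨hr r' (by omega), fun k hk _ => hmax _ (by omega)⟩
  refine ⟨m + 1, by omega, ?_⟩
  rw [Shat_succ hγle, hSm, hhit]
  omega

theorem le_prevailing {t θ : ℕ} (hθ : θ < t) (ω : α) : γ θ ω ≤ prevailing γ t ω :=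
  Finset.le_sup' (fun θ => γ θ ω) (Finset.mem_Icc.2 ⟨θ.zero_le, by omega⟩)

theorem exists_eq_prevailing (n : ℕ) (ω : α) : ∃ θ ≤ n, γ θ ω = prevailing γ (n + 1) ω := by
  obtain ⟨θ, hθ, h⟩ := Finset.exists_mem_eq_sup'
    (Finset.nonempty_Icc.2 (Nat.zero_le (n + 1 - 1))) (fun θ => γ θ ω)
  exact ⟨θ, by simpa using hθ, h.symm⟩

theorem prevailing_eq_of_le {n t : ℕ} (hn : 1 ≤ n) (hnt : n ≤ t) {ω : α}
    (h : ∀ θ, n ≤ θ → θ < t → γ θ ω ≤ prevailing γ n ω) :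
    prevailing γ t ω = prevailing γ n ω := by
  refine le_antisymm (Finset.sup'_le _ _ fun θ hθ => ?_)
    (Finset.sup'_mono _ (Finset.Icc_subset_Icc le_rfl (by omega)) _)
  have hθt := (Finset.mem_Icc.1 hθ).2
  rcases lt_or_ge θ n with hθn | hθn
  · exact le_prevailing hθn ω
  · exact h θ hθn (by omega)

theorem measurable_prevailing {ℱ : ℕ → MeasurableSpace α} (hℱ : Monotone ℱ)
    (hγ : ∀ t, Measurable[ℱ t] (γ t)) (n : ℕ) : Measurable[ℱ n] (prevailing γ (n + 1)) := by
  have hsup : prevailing γ (n + 1) = (Finset.Icc 0 n).sup'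
      (Finset.nonempty_Icc.2 n.zero_le) (fun θ => γ θ) := by
    funext ω
    simp [prevailing, Finset.sup'_apply]
  rw [hsup]
  exact @Finset.measurable_sup' ℝ _ α (ℱ n) _ _ ℕ _ _ _ fun θ hθ =>
    (hγ θ).mono (hℱ (Finset.mem_Icc.1 hθ).2) le_rfl

noncomputable def firstArgmax (γ : ℕ → α → ℝ) (n : ℕ) : α → ℕ :=
  fun ω => sInf {s | γ s ω = prevailing γ (n + 1) ω}

theorem firstArgmax_spec (n : ℕ) (ω : α) :
    firstArgmax γ n ω ≤ n ∧ γ (firstArgmax γ n ω) ω = prevailing γ (n + 1) ω ∧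
      IsRecord (γ · ω) (firstArgmax γ n ω) := by
  obtain ⟨θ, hθn, hθ⟩ := exists_eq_prevailing n ω
  have hmem : γ (firstArgmax γ n ω) ω = prevailing γ (n + 1) ω :=
    Nat.sInf_mem (s := {s | γ s ω = prevailing γ (n + 1) ω}) ⟨θ, hθ⟩
  have hle : firstArgmax γ n ω ≤ n := (Nat.sInf_le hθ).trans hθn
  refine ⟨hle, hmem, fun k hk => lt_of_le_of_ne ?_ fun heq => ?_⟩
  · exact (le_prevailing (by omega) ω).trans_eq hmem.symm
  · exact Nat.notMem_of_lt_sInf hk (heq.trans hmem)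

theorem measurableSet_firstArgmax_eq {ℱ : ℕ → MeasurableSpace α} (hℱ : Monotone ℱ)
    (hγ : ∀ t, Measurable[ℱ t] (γ t)) {n s : ℕ} (hs : s ≤ n) :
    MeasurableSet[ℱ n] {ω | firstArgmax γ n ω = s} := by
  have hset : {ω | firstArgmax γ n ω = s} = {ω | γ s ω = prevailing γ (n + 1) ω ∧
      ∀ k < s, ¬γ k ω = prevailing γ (n + 1) ω} := by
    ext ω
    obtain ⟨θ, -, hθ⟩ := exists_eq_prevailing n ω
    exact Nat.sInf_setOf_eq_iff ⟨θ, hθ⟩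
  rw [hset]
  exact MeasurableSet.setOf_first fun k hk => measurableSet_eq_fun
    ((hγ k).mono (hℱ (hk.trans hs)) le_rfl) (measurable_prevailing hℱ hγ n)

theorem hitTime_firstArgmax (hγC : ∀ t, T ≤ t → ∀ ω, γ t ω = C) {N : ℕ} {ω : α}
    (hs : firstArgmax γ N ω < N) (hlam : prevailing γ (N + 1) ω < C) :
    hitTime γ (firstArgmax γ N ω) (γ (firstArgmax γ N ω)) ω =
      N - firstArgmax γ N ω + hitTime γ N (prevailing γ (N + 1)) ω := by
  obtain ⟨-, hγs, -⟩ := firstArgmax_spec N ω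
  set s := firstArgmax γ N ω
  have hcongr : hitTime γ s (γ s) ω = hitTime γ s (prevailing γ (N + 1)) ω := by
    simp only [hitTime, hγs]
  rw [hcongr, hitTime_eq_add hγC hlam (k := N - s) fun θ _ hθ => le_prevailing (by omega) ω,
    Nat.add_sub_cancel' hs.le]

theorem le_prevailing_of_lt_hitTime {N θ : ℕ} {ω : α}
    (hθ : θ < N + hitTime γ N (prevailing γ (N + 1)) ω) :
    γ θ ω ≤ prevailing γ (N + 1) ω := by
  rcases le_or_gt θ N with hθN | hNθ
  · exact le_prevailing (Nat.lt_succ_of_le hθN) ω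
  · simpa [Nat.add_sub_cancel' hNθ.le] using
      le_of_lt_hitTime (s := N) (θ := θ - N) (by omega) (by omega)

theorem isRecord_hitTime_prevailing (hγC : ∀ t, T ≤ t → ∀ ω, γ t ω = C) {N : ℕ} {ω : α}
    (hlam : prevailing γ (N + 1) ω < C) :
    IsRecord (γ · ω) (N + hitTime γ N (prevailing γ (N + 1)) ω) := fun _ hθ =>
  (le_prevailing_of_lt_hitTime hθ).trans_lt (hitTime_mem hγC hlam).2

theorem sum_Icc_eq_sum_to_hitTime_add (hγC : ∀ t, T ≤ t → ∀ ω, γ t ω = C) {N : ℕ}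
    (hNT : N < T) {ω : α} (hlam : prevailing γ (N + 1) ω < C) (β : ℝ) (h : ℕ → α → ℝ) :
    ∑ t ∈ Finset.Icc (N + 1) T, β ^ t * (h t ω - prevailing γ t ω) =
      ∑ t ∈ Finset.Icc (N + 1) (N + hitTime γ N (prevailing γ (N + 1)) ω),
          β ^ t * (h t ω - prevailing γ (N + 1) ω) +
        ∑ t ∈ Finset.Icc (N + hitTime γ N (prevailing γ (N + 1)) ω + 1) T,
          β ^ t * (h t ω - prevailing γ t ω) := by
  have hσT := hitTime_le hγC hNT (lam := prevailing γ (N + 1)) hlam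
  simp only [Finset.Icc_add_one_left_eq_Ioc]
  rw [← Finset.sum_Ioc_consecutive _ (Nat.le_add_right N (hitTime γ N (prevailing γ (N + 1)) ω))
    (by omega)]
  congr 1
  refine Finset.sum_congr rfl fun t ht => ?_
  have ht' := Finset.mem_Ioc.1 ht
  rw [prevailing_eq_of_le (Nat.le_add_left 1 N) ht'.1 fun _ _ hθ =>
    le_prevailing_of_lt_hitTime (by omega)]

end Paths

def FairAtShat (μ : Measure Ω) (E : ℕ → (Ω → ℝ) → (Ω → ℝ)) (γ : ℕ → Ω → ℝ) (C : ℝ) (T : ℕ)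
    (β : ℝ) (h : ℕ → Ω → ℝ) : Prop :=
  ∀ n : ℕ, (fun ω => E (Shat γ C n ω) (fun ω' => ∑ t ∈ Finset.Icc (Shat γ C n ω' + 1) T,
    β ^ t * (h t ω' - prevailing γ t ω')) ω) =ᵐ[μ] 0

def ResidualNonpos (μ : Measure Ω) (ℱ : ℕ → MeasurableSpace Ω) (E : ℕ → (Ω → ℝ) → (Ω → ℝ))
    (γ : ℕ → Ω → ℝ) (C β : ℝ) (h : ℕ → Ω → ℝ) : Prop :=
  ∀ (s : ℕ) (lam : Ω → ℝ), Measurable[ℱ s] lam → (∀ ω, 0 ≤ lam ω ∧ lam ω < C) →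
    ∀ τ ∈ stopTimes ℱ s, (∀ ω, τ ω ≤ hitTime γ s lam ω) →
      (fun ω => E (s + τ ω) (fun ω' => ∑ t ∈ Finset.Icc (τ ω' + 1) (hitTime γ s lam ω'),
        β ^ t * (h (s + t) ω' - lam ω')) ω) ≤ᵐ[μ] 0

section Bandit

variable {μ : Measure Ω} {ℱ : ℕ → MeasurableSpace Ω} {E : ℕ → (Ω → ℝ) → (Ω → ℝ)}
  {γ h : ℕ → Ω → ℝ} {C β : ℝ} {T : ℕ}

theorem indicator_sum_from_record_le_zero (hE : ConsistentCNE μ ℱ E) (hℱ : Monotone ℱ)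
    (hγ : ∀ t, Measurable[ℱ t] (γ t)) (hγle : ∀ t ω, γ t ω ≤ C)
    (hγC : ∀ t, T ≤ t → ∀ ω, γ t ω = C) (hfair : FairAtShat μ E γ C T β h) {N : ℕ}
    {A : Set Ω} (hA : MeasurableSet[ℱ N] A) {ρ : Ω → ℕ}
    (hρ : ∀ k, MeasurableSet[ℱ (N + k)] {ω | ρ ω = k})
    (hrec : ∀ ω ∈ A, IsRecord (γ · ω) (N + ρ ω)) :
    E N (A.indicator fun ω => ∑ t ∈ Finset.Icc (N + ρ ω + 1) T,
      β ^ t * (h t ω - prevailing γ t ω)) ≤ᵐ[μ] 0 := by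
  have hex : ∀ ω ∈ A, ∃ m, Shat γ C m ω = N + ρ ω := fun ω hω =>
    let ⟨m, _, hm⟩ := exists_Shat_eq_of_isRecord hγle (hrec ω hω); ⟨m, hm⟩
  set κ : Ω → ℕ × ℕ := fun ω => (ρ ω, sInf {m | Shat γ C m ω = N + ρ ω})
  have hκ : ∀ ω ∈ A, ∀ k m, κ ω = (k, m) ↔
      ρ ω = k ∧ Shat γ C m ω = N + k ∧ ∀ j < m, ¬Shat γ C j ω = N + k := by
    intro ω hω k m
    simp only [κ, Prod.mk.injEq]
    constructor
    · rintro ⟨rfl, hm⟩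
      exact ⟨rfl, (Nat.sInf_setOf_eq_iff (hex ω hω)).1 hm⟩
    · rintro ⟨rfl, hm⟩
      exact ⟨rfl, (Nat.sInf_setOf_eq_iff (hex ω hω)).2 hm⟩
  refine hE.indicator_le_zero_of_index (Finset.range (T + 1) ×ˢ Finset.range (T + 1)) κ
    (fun i => N + i.1)
    (fun i ω => ∑ t ∈ Finset.Icc (Shat γ C i.2 ω + 1) T, β ^ t * (h t ω - prevailing γ t ω))
    (fun ω hω => ?_) (fun ω hω => ?_) (fun _ _ => Nat.le_add_right _ _) (fun i _ => ?_)
    (fun i _ => ?_)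
  · obtain ⟨m, hm, hSm⟩ := exists_Shat_eq_of_isRecord hγle (hrec ω hω)
    have hT := (hrec ω hω).le hγC
    simp only [κ, Finset.mem_product, Finset.mem_range]
    exact ⟨by omega,
      (Nat.sInf_le (s := {m | Shat γ C m ω = N + ρ ω}) hSm).trans_lt (by omega)⟩
  · obtain ⟨m, hm⟩ := hex ω hω
    have hS : Shat γ C (sInf {m | Shat γ C m ω = N + ρ ω}) ω = N + ρ ω :=
      Nat.sInf_mem (s := {m | Shat γ C m ω = N + ρ ω}) ⟨m, hm⟩
    simp only [κ, hS]
  · obtain ⟨k, m⟩ := i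
    have hset : A ∩ κ ⁻¹' {(k, m)} = A ∩ ({ω | ρ ω = k} ∩
        {ω | Shat γ C m ω = N + k ∧ ∀ j < m, ¬Shat γ C j ω = N + k}) := by
      ext ω
      simp only [Set.mem_inter_iff, Set.mem_preimage, Set.mem_singleton_iff, Set.mem_ofPred_eq]
      exact and_congr_right fun hω => hκ ω hω k m
    rw [hset]
    exact (hℱ (Nat.le_add_right N k) _ hA).inter ((hρ k).inter
      (MeasurableSet.setOf_first fun j _ => measurableSet_Shat_eq hℱ hγ hγle hγC j (N + k)))
  · obtain ⟨k, m⟩ := i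
    filter_upwards [hfair m] with ω hfairω hω hκω
    obtain ⟨-, hSm, -⟩ := (hκ ω hω k m).1 hκω
    simp only [Pi.zero_apply, hSm] at hfairω
    exact hfairω.le

theorem indicator_sum_to_hitTime_le_zero (hE : ConsistentCNE μ ℱ E) (hℱ : Monotone ℱ)
    (hγ : ∀ t, Measurable[ℱ t] (γ t)) (hγBdd : ∀ t, t < T → ∀ ω, 0 ≤ γ t ω ∧ γ t ω < C)
    (hγle : ∀ t ω, γ t ω ≤ C) (hγC : ∀ t, T ≤ t → ∀ ω, γ t ω = C) (hβ : 0 ≤ β)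
    (hresid : ResidualNonpos μ ℱ E γ C β h) {N : ℕ} (hNT : N < T) :
    E N ({ω | firstArgmax γ N ω = N}ᶜ.indicator fun ω =>
      ∑ t ∈ Finset.Icc (N + 1) (N + hitTime γ N (prevailing γ (N + 1)) ω),
        β ^ t * (h t ω - prevailing γ (N + 1) ω)) ≤ᵐ[μ] 0 := by
  set τ : ℕ → Ω → ℕ := fun s ω => min (N - s) (hitTime γ s (γ s) ω)
  set X : ℕ → Ω → ℝ := fun s ω =>
    ∑ t ∈ Finset.Icc (τ s ω + 1) (hitTime γ s (γ s) ω), β ^ t * (h (s + t) ω - γ s ω)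
  have hhit : ∀ ω, firstArgmax γ N ω < N →
      hitTime γ (firstArgmax γ N ω) (γ (firstArgmax γ N ω)) ω =
        N - firstArgmax γ N ω + hitTime γ N (prevailing γ (N + 1)) ω := fun ω hs =>
    hitTime_firstArgmax hγC hs <|
      (firstArgmax_spec N ω).2.1 ▸ (hγBdd _ (by omega) ω).2
  refine hE.indicator_le_zero_of_index (Finset.range N) (firstArgmax γ N) (fun _ => N)
    (fun s ω => β ^ s * X s ω) (fun ω hω => ?_) (fun ω hω => ?_) (fun _ _ => le_rfl)
    (fun s hs => ?_) (fun s hs => ?_)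
  · exact Finset.mem_range.2 (lt_of_le_of_ne (firstArgmax_spec N ω).1 hω)
  · have hsN : firstArgmax γ N ω < N := lt_of_le_of_ne (firstArgmax_spec N ω).1 hω
    have hτ : τ (firstArgmax γ N ω) ω = N - firstArgmax γ N ω := by
      simp only [τ, hhit ω hsN]
      omega
    simp only [X, hτ, hhit ω hsN, (firstArgmax_spec N ω).2.1]
    exact sum_Icc_pow_mul_eq_pow_mul_sum hsN.le _ β fun t => h t ω - prevailing γ (N + 1) ω
  · have hsN := Finset.mem_range.1 hs
    have hset : {ω | firstArgmax γ N ω = N}ᶜ ∩ firstArgmax γ N ⁻¹' {s} =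
        {ω | firstArgmax γ N ω = s} := by
      ext ω
      simp only [Set.mem_inter_iff, Set.mem_compl_iff, Set.mem_ofPred_eq, Set.mem_preimage,
        Set.mem_singleton_iff]
      exact ⟨fun h => h.2, fun h => ⟨by omega, h⟩⟩
    rw [hset]
    exact measurableSet_firstArgmax_eq hℱ hγ hsN.le
  · have hsN := Finset.mem_range.1 hs
    have hγs : ∀ ω, 0 ≤ γ s ω ∧ γ s ω < C := hγBdd s (by omega)
    have hτ : τ s ∈ stopTimes ℱ s := min_mem_stopTimes hℱ (by omega)
      (fun ω => (hitTime_mem hγC (hγs ω).2).1) (measurableSet_hitTime_eq hℱ hγ hγle hγC (hγ s))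
    filter_upwards [hresid s (γ s) (hγ s) hγs (τ s) hτ (fun ω => min_le_right _ _),
      hE.posHom N (X s) (fun _ => β ^ s) measurable_const
        (Eventually.of_forall fun _ => pow_nonneg hβ s)] with ω hres hpos _ hκ
    have hsτ : s + τ s ω = N := by
      simp only [τ, ← hκ, hhit ω (hκ ▸ hsN)]
      omega
    simp only [hsτ, Pi.zero_apply] at hres
    rw [hpos]
    exact mul_nonpos_of_nonneg_of_nonpos (pow_nonneg hβ s) hres

end Bandit

theorem stmt9_general (μ : Measure Ω)
    (ℱ : ℕ → MeasurableSpace Ω) (hℱmono : Monotone ℱ)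
    (E : ℕ → (Ω → ℝ) → (Ω → ℝ)) (hE : ConsistentCNE μ ℱ E)
    (T : ℕ) (C : ℝ) (β : ℝ) (hβ : β ∈ Set.Ioo (0 : ℝ) 1)
    (h : ℕ → Ω → ℝ)
    -- the robust Gittins index process
    (γ : ℕ → Ω → ℝ) (hγAdapted : ∀ t, Measurable[ℱ t] (γ t))
    (hγBdd : ∀ t, t < T → ∀ ω, 0 ≤ γ t ω ∧ γ t ω < C)
    (hγC : ∀ t, T ≤ t → ∀ ω, γ t ω = C)
    -- known (Proposition 4.1): the fair-game property at the times `Ŝ_n`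
    (hfair : ∀ n : ℕ,
      (fun ω => E (Shat γ C n ω)
        (fun ω' => ∑ t ∈ Finset.Icc (Shat γ C n ω' + 1) T,
          β ^ t * (h t ω' - prevailing γ t ω')) ω) =ᵐ[μ] 0)
    -- known (Lemma A.8): residual nonpositivity up to the hitting time:
    -- for `τ ∈ 𝒯(s)` with `τ ≤ σ(s,λ)`,
    -- `𝓔(∑_{t=τ+1}^{σ(s,λ)} β^t (h(s+t) - λ) | ℱ_{s+τ}) ≤ 0` a.s.
    (hresid : ∀ (s : ℕ) (lam : Ω → ℝ), Measurable[ℱ s] lam →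
      (∀ ω, 0 ≤ lam ω ∧ lam ω < C) →
      ∀ τ ∈ stopTimes ℱ s, (∀ ω, τ ω ≤ hitTime γ s lam ω) →
      (fun ω => E (s + τ ω)
        (fun ω' => ∑ t ∈ Finset.Icc (τ ω' + 1) (hitTime γ s lam ω'),
          β ^ t * (h (s + t) ω' - lam ω')) ω) ≤ᵐ[μ] 0) :
    ∀ N : ℕ, N ≤ T - 1 →
      E N (fun ω => ∑ t ∈ Finset.Icc (N + 1) T,
        β ^ t * (h t ω - prevailing γ t ω)) ≤ᵐ[μ] 0 := by
  intro N _
  rcases le_or_gt T N with hTN | hNT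
  · simp only [Finset.Icc_eq_empty_of_lt (Nat.lt_succ_of_le hTN), Finset.sum_empty]
    exact (hE.normalized N).le
  have hγle : ∀ t ω, γ t ω ≤ C := fun t ω =>
    (lt_or_ge t T).elim (fun ht => (hγBdd t ht ω).2.le) fun ht => (hγC t ht ω).le
  have hlam : ∀ ω, prevailing γ (N + 1) ω < C := fun ω =>
    let ⟨θ, hθ, hθeq⟩ := exists_eq_prevailing N ω
    hθeq ▸ (hγBdd θ (by omega) ω).2
  have hB : MeasurableSet[ℱ N] {ω | firstArgmax γ N ω = N} :=
    measurableSet_firstArgmax_eq hℱmono hγAdapted le_rfl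
  have hrecord := indicator_sum_from_record_le_zero hE hℱmono hγAdapted hγle hγC hfair hB
    (fun k => MeasurableSet.const (0 = k)) fun ω hω => by
      simpa [show firstArgmax γ N ω = N from hω] using (firstArgmax_spec (γ := γ) N ω).2.2
  have hbefore := indicator_sum_to_hitTime_le_zero hE hℱmono hγAdapted hγBdd hγle hγC hβ.1.le
    hresid hNT
  have hafter := indicator_sum_from_record_le_zero hE hℱmono hγAdapted hγle hγC hfair hB.compl
    (measurableSet_hitTime_eq hℱmono hγAdapted hγle hγC (measurable_prevailing hℱmono hγAdapted N))
    fun ω _ => isRecord_hitTime_prevailing hγC (hlam ω)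
  convert hE.add_le_zero hrecord (hE.add_le_zero hbefore hafter) using 2
  funext ω
  by_cases hω : firstArgmax γ N ω = N
  · simp [hω]
  · simp [hω, sum_Icc_eq_sum_to_hitTime_add hγC hNT (hlam ω) β h]

/-- **Theorem 4.3.**  With the prevailing reward `Γ(t) = max_{0≤θ≤t-1} γ(θ)`,
for every deterministic time `N` with `0 ≤ N ≤ T-1`,
`𝓔(∑_{t=N+1}^{T} β^t (h(t) - Γ(t)) | ℱ_N) ≤ 0` a.s. -/
theorem stmt9 (μ : Measure Ω) [IsProbabilityMeasure μ]
    (ℱ : ℕ → MeasurableSpace Ω) (hℱmono : Monotone ℱ)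
    (hℱle : ∀ t, ℱ t ≤ ‹MeasurableSpace Ω›)
    (E : ℕ → (Ω → ℝ) → (Ω → ℝ)) (hE : ConsistentCNE μ ℱ E)
    (T : ℕ) (C : ℝ) (hC : 0 < C) (β : ℝ) (hβ : β ∈ Set.Ioo (0 : ℝ) 1)
    (h : ℕ → Ω → ℝ) (hhAdapted : ∀ t, Measurable[ℱ t] (h t))
    (hhBdd : ∀ t, t ≤ T → ∀ ω, 0 ≤ h t ω ∧ h t ω < C)
    (hhC : ∀ t, T < t → ∀ ω, h t ω = C)
    -- the robust Gittins index process
    (γ : ℕ → Ω → ℝ) (hγAdapted : ∀ t, Measurable[ℱ t] (γ t))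
    (hγBdd : ∀ t, t < T → ∀ ω, 0 ≤ γ t ω ∧ γ t ω < C)
    (hγC : ∀ t, T ≤ t → ∀ ω, γ t ω = C)
    -- known (Proposition 4.1): the fair-game property at the times `Ŝ_n`
    (hfair : ∀ n : ℕ,
      (fun ω => E (Shat γ C n ω)
        (fun ω' => ∑ t ∈ Finset.Icc (Shat γ C n ω' + 1) T,
          β ^ t * (h t ω' - prevailing γ t ω')) ω) =ᵐ[μ] 0)
    -- known (Lemma A.8): residual nonpositivity up to the hitting time:
    -- for `τ ∈ 𝒯(s)` with `τ ≤ σ(s,λ)`,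
    -- `𝓔(∑_{t=τ+1}^{σ(s,λ)} β^t (h(s+t) - λ) | ℱ_{s+τ}) ≤ 0` a.s.
    (hresid : ∀ (s : ℕ) (lam : Ω → ℝ), Measurable[ℱ s] lam →
      (∀ ω, 0 ≤ lam ω ∧ lam ω < C) →
      ∀ τ ∈ stopTimes ℱ s, (∀ ω, τ ω ≤ hitTime γ s lam ω) →
      (fun ω => E (s + τ ω)
        (fun ω' => ∑ t ∈ Finset.Icc (τ ω' + 1) (hitTime γ s lam ω'),
          β ^ t * (h (s + t) ω' - lam ω')) ω) ≤ᵐ[μ] 0) :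
    ∀ N : ℕ, N ≤ T - 1 →
      E N (fun ω => ∑ t ∈ Finset.Icc (N + 1) T,
        β ^ t * (h t ω - prevailing γ t ω)) ≤ᵐ[μ] 0 :=
  stmt9_general μ ℱ hℱmono E hE T C β hβ h γ hγAdapted hγBdd hγC hfair hresid
end
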